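/- arXiv:2101.10787 — 8 statements merged into one kernel-verified Lean document; each statement's English description precedes it below -/
import Mathlib

section
/- Let e₁, e₂ ∈ ℝ⁴ satisfy ⟪e₁,e₁⟫ = ⟪e₂,e₂⟫ = 1 and ⟪e₁,e₂⟫ = 0, and suppose the plane span{e₁,e₂} is not contained in {0}×ℝ³ (i.e. the 0-th coordinate of e₁ or of e₂ is nonzero). Write eᵢ⁰ for the 0-th coordinate of eᵢ and ∂₀ = (1,0,0,0). Then the vector τ = (∂₀ + e₁⁰e₁ + e₂⁰e₂)/√(1+(e₁⁰)²+(e₂⁰)²) satisfies ⟪τ,τ⟫ = −1, ⟪τ,e₁⟫ = ⟪τ,e₂⟫ = 0 and ⟪τ,∂₀⟫ < 0; there exists ν ∈ ℝ⁴ with ⟪ν,ν⟫ = 1, ν₀ = 0, ⟪ν,τ⟫ = ⟪ν,e₁⟫ = ⟪ν,e₂⟫ = 0; and for every t ∈ ℝ⁴ with ⟪t,t⟫ = −1, ⟪t,e₁⟫ = ⟪t,e₂⟫ = 0 and t₀ > 0, one has τ₀ ≤ t₀. -/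
/-!
For orthonormal `e₁, e₂`, the vector `w = ∂₀ + e₁⁰ e₁ + e₂⁰ e₂` is `∂₀` minus its orthogonal
projection onto the plane, so `⟪x, w⟫ = ⟪x, ∂₀⟫ = -x₀` for every `x` orthogonal to the plane.
Taking `x = w` gives `⟪w, w⟫ = -w₀ = -(1 + (e₁⁰)² + (e₂⁰)²)`, which is the normalisation of `τ`.
The spatial vector `(0, e₁' × e₂')`, with `'` the spatial part, is orthogonal to `e₁, e₂, ∂₀`,
hence to `τ`, and Lagrange's identity gives its norm. Finally, for `t` as in the statement
`⟪t, τ⟫ = -t₀ / τ₀`, and the reverse Cauchy–Schwarz inequality `⟪t, τ⟫ ≤ -1` for future-pointing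
unit timelike vectors yields `τ₀ ≤ t₀`.
-/

/-- The Minkowski bilinear form on `ℝ⁴`: `⟪x,y⟫ = -x₀y₀ + x₁y₁ + x₂y₂ + x₃y₃`. -/
noncomputable def mink (x y : Fin 4 → ℝ) : ℝ :=
  -(x 0 * y 0) + x 1 * y 1 + x 2 * y 2 + x 3 * y 3

open Matrix

lemma mink_eq_neg_mul_add_dotProduct_tail (x y : Fin 4 → ℝ) :
    mink x y = -(x 0 * y 0) + Fin.tail x ⬝ᵥ Fin.tail y := by
  simp only [mink, dotProduct, Fin.tail, Fin.sum_univ_three, Fin.succ_zero_eq_one,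
    Fin.succ_one_eq_two, Fin.reduceSucc]
  ring

lemma mink_comm (x y : Fin 4 → ℝ) : mink x y = mink y x := by
  simp only [mink]; ring

@[simp]
lemma mink_add_left (x y z : Fin 4 → ℝ) : mink (x + y) z = mink x z + mink y z := by
  simp only [mink, Pi.add_apply]; ring

@[simp]
lemma mink_smul_left (c : ℝ) (x y : Fin 4 → ℝ) : mink (c • x) y = c * mink x y := by
  simp only [mink, Pi.smul_apply, smul_eq_mul]; ring

@[simp]
lemma mink_add_right (x y z : Fin 4 → ℝ) : mink x (y + z) = mink x y + mink x z := by
  rw [mink_comm, mink_add_left, mink_comm y, mink_comm z]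

@[simp]
lemma mink_smul_right (c : ℝ) (x y : Fin 4 → ℝ) : mink x (c • y) = c * mink x y := by
  rw [mink_comm, mink_smul_left, mink_comm]

@[simp]
lemma mink_timeAxis_left (x : Fin 4 → ℝ) : mink ![1, 0, 0, 0] x = -x 0 := by
  simp [mink]

lemma mink_timeAxis_right (x : Fin 4 → ℝ) : mink x ![1, 0, 0, 0] = -x 0 := by
  rw [mink_comm, mink_timeAxis_left]

lemma mink_cons_zero_left (v : Fin 3 → ℝ) (x : Fin 4 → ℝ) :
    mink (Fin.cons 0 v) x = v ⬝ᵥ Fin.tail x := by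
  simp [mink_eq_neg_mul_add_dotProduct_tail]

lemma dotProduct_self_nonneg (v : Fin 3 → ℝ) : 0 ≤ v ⬝ᵥ v := by
  simpa using dotProduct_star_self_nonneg v

lemma mink_le_neg_one_of_timelike_unit {x y : Fin 4 → ℝ} (hx : mink x x = -1)
    (hy : mink y y = -1) (hx₀ : 0 < x 0) (hy₀ : 0 < y 0) : mink x y ≤ -1 := by
  rw [mink_eq_neg_mul_add_dotProduct_tail] at hx hy ⊢
  set u := Fin.tail x
  set v := Fin.tail y
  have hlagrange : 0 ≤ u ⬝ᵥ u * v ⬝ᵥ v - (u ⬝ᵥ v) ^ 2 := by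
    simpa [cross_dot_cross, dotProduct_comm u v, sq] using dotProduct_self_nonneg (u ⨯₃ v)
  have hdiff : 0 ≤ u ⬝ᵥ u - 2 * u ⬝ᵥ v + v ⬝ᵥ v := by
    have := dotProduct_self_nonneg (u - v)
    simp only [sub_dotProduct, dotProduct_sub, dotProduct_comm v u] at this
    linarith
  have hsq : (1 + u ⬝ᵥ v) ^ 2 ≤ (x 0 * y 0) ^ 2 := by
    rw [mul_pow, show x 0 ^ 2 = 1 + u ⬝ᵥ u by linarith, show y 0 ^ 2 = 1 + v ⬝ᵥ v by linarith]
    nlinarith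
  linarith [le_of_sq_le_sq hsq (by positivity)]

/-- When `e₁, e₂` are orthonormal, this is the component of `∂₀ = ![1, 0, 0, 0]` orthogonal to
their span. -/
noncomputable def timeAxisPerp (e₁ e₂ : Fin 4 → ℝ) : Fin 4 → ℝ :=
  ![1, 0, 0, 0] + e₁ 0 • e₁ + e₂ 0 • e₂

noncomputable def spatialNormal (e₁ e₂ : Fin 4 → ℝ) : Fin 4 → ℝ :=
  Fin.cons 0 (Fin.tail e₁ ⨯₃ Fin.tail e₂)

section OrthonormalPair

variable {e₁ e₂ : Fin 4 → ℝ}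

lemma timeAxisPerp_zero : timeAxisPerp e₁ e₂ 0 = 1 + e₁ 0 ^ 2 + e₂ 0 ^ 2 := by
  simp only [timeAxisPerp, Pi.add_apply, Pi.smul_apply, smul_eq_mul, Matrix.cons_val_zero]
  ring

lemma mink_timeAxisPerp_right {x : Fin 4 → ℝ} (hx₁ : mink x e₁ = 0) (hx₂ : mink x e₂ = 0) :
    mink x (timeAxisPerp e₁ e₂) = -x 0 := by
  simp only [timeAxisPerp, mink_add_right, mink_smul_right, mink_timeAxis_right, hx₁, hx₂]
  ring

lemma spatialNormal_zero : spatialNormal e₁ e₂ 0 = 0 := rfl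

lemma mink_spatialNormal_left₁ : mink (spatialNormal e₁ e₂) e₁ = 0 := by
  rw [spatialNormal, mink_cons_zero_left, dotProduct_comm, dot_self_cross]

lemma mink_spatialNormal_left₂ : mink (spatialNormal e₁ e₂) e₂ = 0 := by
  rw [spatialNormal, mink_cons_zero_left, dotProduct_comm, dot_cross_self]

variable (h11 : mink e₁ e₁ = 1) (h22 : mink e₂ e₂ = 1) (h12 : mink e₁ e₂ = 0)

include h11 h12 in
lemma mink_timeAxisPerp_left₁ : mink (timeAxisPerp e₁ e₂) e₁ = 0 := by
  simp only [timeAxisPerp, mink_add_left, mink_smul_left, mink_timeAxis_left, h11,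
    mink_comm e₂ e₁, h12]
  ring

include h22 h12 in
lemma mink_timeAxisPerp_left₂ : mink (timeAxisPerp e₁ e₂) e₂ = 0 := by
  simp only [timeAxisPerp, mink_add_left, mink_smul_left, mink_timeAxis_left, h22, h12]
  ring

include h11 h22 h12 in
lemma mink_timeAxisPerp_self :
    mink (timeAxisPerp e₁ e₂) (timeAxisPerp e₁ e₂) = -(1 + e₁ 0 ^ 2 + e₂ 0 ^ 2) := by
  rw [mink_timeAxisPerp_right (mink_timeAxisPerp_left₁ h11 h12) (mink_timeAxisPerp_left₂ h22 h12),
    timeAxisPerp_zero]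

include h11 h22 h12 in
lemma mink_spatialNormal_self :
    mink (spatialNormal e₁ e₂) (spatialNormal e₁ e₂) = 1 + e₁ 0 ^ 2 + e₂ 0 ^ 2 := by
  rw [mink_eq_neg_mul_add_dotProduct_tail] at h11 h22 h12
  rw [spatialNormal, mink_cons_zero_left, Fin.tail_cons, cross_dot_cross,
    dotProduct_comm (Fin.tail e₂) (Fin.tail e₁)]
  linear_combination (Fin.tail e₂ ⬝ᵥ Fin.tail e₂) * h11 + (1 + e₁ 0 ^ 2) * h22 -
    (Fin.tail e₁ ⬝ᵥ Fin.tail e₂ + e₁ 0 * e₂ 0) * h12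

end OrthonormalPair

theorem stmt0_general (e₁ e₂ : Fin 4 → ℝ)
    (h11 : mink e₁ e₁ = 1) (h22 : mink e₂ e₂ = 1) (h12 : mink e₁ e₂ = 0)
    (d0 : Fin 4 → ℝ) (hd0 : d0 = ![1, 0, 0, 0])
    (τ : Fin 4 → ℝ)
    (hτ : τ = (1 / Real.sqrt (1 + (e₁ 0) ^ 2 + (e₂ 0) ^ 2)) • (d0 + e₁ 0 • e₁ + e₂ 0 • e₂)) :
    mink τ τ = -1 ∧ mink τ e₁ = 0 ∧ mink τ e₂ = 0 ∧ mink τ d0 < 0 ∧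
    (∃ ν : Fin 4 → ℝ, mink ν ν = 1 ∧ ν 0 = 0 ∧ mink ν τ = 0 ∧ mink ν e₁ = 0 ∧ mink ν e₂ = 0) ∧
    (∀ t : Fin 4 → ℝ, mink t t = -1 → mink t e₁ = 0 → mink t e₂ = 0 → 0 < t 0 → τ 0 ≤ t 0) := by
  subst hd0
  set c := Real.sqrt (1 + e₁ 0 ^ 2 + e₂ 0 ^ 2)
  have hc : 0 < c := by positivity
  have hc2 : c ^ 2 = 1 + e₁ 0 ^ 2 + e₂ 0 ^ 2 := Real.sq_sqrt (by positivity)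
  replace hτ : τ = c⁻¹ • timeAxisPerp e₁ e₂ := by rw [hτ, one_div]; rfl
  have hτ₀ : τ 0 = c := by
    rw [hτ, Pi.smul_apply, timeAxisPerp_zero, ← hc2, smul_eq_mul]; field_simp
  have hττ : mink τ τ = -1 := by
    rw [hτ, mink_smul_left, mink_smul_right, mink_timeAxisPerp_self h11 h22 h12, ← hc2]
    field_simp
  refine ⟨hττ, by simp [hτ, mink_timeAxisPerp_left₁ h11 h12],
    by simp [hτ, mink_timeAxisPerp_left₂ h22 h12], by rw [mink_timeAxis_right, hτ₀]; linarith,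
    ⟨c⁻¹ • spatialNormal e₁ e₂, ?_, by simp [spatialNormal_zero], ?_,
      by simp [mink_spatialNormal_left₁], by simp [mink_spatialNormal_left₂]⟩, ?_⟩
  · rw [mink_smul_left, mink_smul_right, mink_spatialNormal_self h11 h22 h12, ← hc2]
    field_simp
  · rw [hτ, mink_smul_left, mink_smul_right,
      mink_timeAxisPerp_right mink_spatialNormal_left₁ mink_spatialNormal_left₂, spatialNormal_zero]
    simp
  · intro t htt ht₁ ht₂ ht₀
    have hreverse := mink_le_neg_one_of_timelike_unit htt hττ ht₀ (hτ₀ ▸ hc)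
    rw [hτ, mink_smul_right, mink_timeAxisPerp_right ht₁ ht₂, inv_mul_le_iff₀ hc] at hreverse
    rw [hτ₀]
    linarith

theorem stmt0 (e₁ e₂ : Fin 4 → ℝ)
    (h11 : mink e₁ e₁ = 1) (h22 : mink e₂ e₂ = 1) (h12 : mink e₁ e₂ = 0)
    (hplane : e₁ 0 ≠ 0 ∨ e₂ 0 ≠ 0)
    (d0 : Fin 4 → ℝ) (hd0 : d0 = ![1, 0, 0, 0])
    (τ : Fin 4 → ℝ)
    (hτ : τ = (1 / Real.sqrt (1 + (e₁ 0) ^ 2 + (e₂ 0) ^ 2)) • (d0 + e₁ 0 • e₁ + e₂ 0 • e₂)) :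
    mink τ τ = -1 ∧ mink τ e₁ = 0 ∧ mink τ e₂ = 0 ∧ mink τ d0 < 0 ∧
    (∃ ν : Fin 4 → ℝ, mink ν ν = 1 ∧ ν 0 = 0 ∧ mink ν τ = 0 ∧ mink ν e₁ = 0 ∧ mink ν e₂ = 0) ∧
    (∀ t : Fin 4 → ℝ, mink t t = -1 → mink t e₁ = 0 → mink t e₂ = 0 → 0 < t 0 → τ 0 ≤ t 0) :=
  stmt0_general e₁ e₂ h11 h22 h12 d0 hd0 τ hτ
end

section
/- Let Z = (Z₀,Z₁,Z₂,Z₃) ∈ ℂ⁴ satisfy −Z₀² + Z₁² + Z₂² + Z₃² = 0 and Z₁ − iZ₂ ≠ 0. Then, setting μ = (Z₁ − iZ₂)/2, a = (Z₀ + Z₃)/(Z₁ − iZ₂) and b = (Z₀ − Z₃)/(Z₁ − iZ₂), one has Z = μ·W(a,b). -/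
/-! The null condition factors as `(Z₁ − iZ₂)(Z₁ + iZ₂) = (Z₀ + Z₃)(Z₀ − Z₃)`, i.e.
`ab = (Z₁ + iZ₂)/(Z₁ − iZ₂)`; after this substitution every coordinate of `μ • W(a, b)` is linear
in `Z`. -/

/-- The Weierstrass vector `W(a,b) = (a+b, 1+ab, i(1−ab), a−b) ∈ ℂ⁴`. -/
noncomputable def W (a b : ℂ) : Fin 4 → ℂ :=
  ![a + b, 1 + a * b, Complex.I * (1 - a * b), a - b]

theorem half_smul_W_div {d s p q : ℂ} (hd : d ≠ 0) (hprod : d * s = p * q) :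
    (d / 2) • W (p / d) (q / d) =
      ![(p + q) / 2, (d + s) / 2, Complex.I * (d - s) / 2, (p - q) / 2] := by
  have hab : p / d * (q / d) = s / d := by
    rw [div_mul_div_comm, ← hprod, mul_div_mul_left _ _ hd]
  ext i
  fin_cases i <;> simp [W, hab] <;> field_simp

theorem null_cone_factor {Z₀ Z₁ Z₂ Z₃ : ℂ} (hnull : -Z₀ ^ 2 + Z₁ ^ 2 + Z₂ ^ 2 + Z₃ ^ 2 = 0) :
    (Z₁ - Complex.I * Z₂) * (Z₁ + Complex.I * Z₂) = (Z₀ + Z₃) * (Z₀ - Z₃) := by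
  linear_combination hnull - Z₂ ^ 2 * Complex.I_sq

theorem stmt3 (Z : Fin 4 → ℂ)
    (hnull : -(Z 0) ^ 2 + (Z 1) ^ 2 + (Z 2) ^ 2 + (Z 3) ^ 2 = 0)
    (hne : Z 1 - Complex.I * Z 2 ≠ 0) :
    Z = ((Z 1 - Complex.I * Z 2) / 2) •
        W ((Z 0 + Z 3) / (Z 1 - Complex.I * Z 2)) ((Z 0 - Z 3) / (Z 1 - Complex.I * Z 2)) := by
  rw [half_smul_W_div hne (null_cone_factor hnull)]
  ext i
  fin_cases i <;> simp
  linear_combination Z 2 * Complex.I_sq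
end

section
/- Let U ⊆ ℂ be open, let μ, a, b : U → ℂ be smooth with μ(w) ≠ 0 for every w ∈ U, and let f : U → ℝ⁴ be a smooth map such that ∂_w f(w) = μ(w)·W(a(w), b(w)) for all w ∈ U (componentwise, viewing ℝ⁴ ⊂ ℂ⁴). Then every component of f is a harmonic function on U (Δf^i = 0 for the Euclidean Laplacian Δ = ∂²/∂u² + ∂²/∂v²) if and only if μ, a and b are holomorphic on U. -/
/-- The Wirtinger derivative `∂_w g = (∂_u g − i ∂_v g)/2` of `g : ℂ → ℂ`. -/
noncomputable def wirt (g : ℂ → ℂ) (w : ℂ) : ℂ :=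
  (fderiv ℝ g w 1 - Complex.I * fderiv ℝ g w Complex.I) / 2

/-- The Euclidean Laplacian `Δg = ∂²g/∂u² + ∂²g/∂v²` of `g : ℂ → ℝ`. -/
noncomputable def lapC (g : ℂ → ℝ) (w : ℂ) : ℝ :=
  fderiv ℝ (fun z => fderiv ℝ g z 1) w 1 +
    fderiv ℝ (fun z => fderiv ℝ g z Complex.I) w Complex.I

open Complex

lemma fderiv_ofReal_comp {g : ℂ → ℝ} {z : ℂ} (hg : DifferentiableAt ℝ g z) (v : ℂ) :
    fderiv ℝ (fun z => ((g z : ℝ) : ℂ)) z v = ((fderiv ℝ g z v : ℝ) : ℂ) := by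
  have h := (Complex.ofRealCLM.hasFDerivAt.comp z hg.hasFDerivAt).fderiv
  rw [show (fun z => ((g z : ℝ) : ℂ)) = (Complex.ofRealCLM ∘ g) from rfl, h]
  rfl

lemma lap_iff_CR {U : Set ℂ} (hU : IsOpen U) {w : ℂ} (hw : w ∈ U)
    {g : ℂ → ℝ} (hg : ContDiffOn ℝ (⊤ : ℕ∞) g U) {φ : ℂ → ℂ}
    (hφ : ∀ z ∈ U, wirt (fun z => ((g z : ℝ) : ℂ)) z = φ z) :
    (lapC g w = 0 ↔ fderiv ℝ φ w Complex.I = Complex.I * fderiv ℝ φ w 1) := by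
  have hc : ContDiffAt ℝ 2 g w := (hg.contDiffAt (hU.mem_nhds hw)).of_le (by exact WithTop.coe_le_coe.mpr (le_top : (2 : ℕ∞) ≤ ⊤))
  have hS : DifferentiableAt ℝ (fderiv ℝ g) w :=
    (hc.fderiv_right (m := 1) (by norm_num)).differentiableAt one_ne_zero
  set S := fderiv ℝ (fderiv ℝ g) w with hSdef
  have happ : ∀ v u : ℂ, fderiv ℝ (fun z => fderiv ℝ g z v) w u = S u v := by
    intro v u
    have h := (((ContinuousLinearMap.apply ℝ ℝ v).hasFDerivAt).comp w hS.hasFDerivAt).fderiv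
    have h2 : (fun z => fderiv ℝ g z v) = ((ContinuousLinearMap.apply ℝ ℝ v) ∘ (fderiv ℝ g)) := rfl
    rw [h2, h]; rfl
  have hGv : ∀ v : ℂ, DifferentiableAt ℝ (fun z => fderiv ℝ g z v) w := fun v =>
    ((ContinuousLinearMap.apply ℝ ℝ v).differentiableAt).comp w hS
  have hsym := hc.isSymmSndFDerivAt (by simp [minSmoothness_of_isRCLikeNormedField])
  have hlap : lapC g w = S 1 1 + S Complex.I Complex.I := by
    rw [lapC, happ, happ]
  have hev : φ =ᶠ[nhds w] fun z =>
      (((fderiv ℝ g z 1 : ℝ) : ℂ) - Complex.I * ((fderiv ℝ g z Complex.I : ℝ) : ℂ)) / 2 := by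
    filter_upwards [hU.mem_nhds hw] with z hz
    have hgz : DifferentiableAt ℝ g z :=
      (hg.differentiableOn (by simp)).differentiableAt (hU.mem_nhds hz)
    rw [← hφ z hz, wirt, fderiv_ofReal_comp hgz, fderiv_ofReal_comp hgz]
  have hfd : fderiv ℝ φ w = fderiv ℝ (fun z =>
      (((fderiv ℝ g z 1 : ℝ) : ℂ) - Complex.I * ((fderiv ℝ g z Complex.I : ℝ) : ℂ)) / 2) w :=
    hev.fderiv_eq
  have hform : ∀ u : ℂ, fderiv ℝ φ w u
      = (((S u 1 : ℝ) : ℂ) - Complex.I * ((S u Complex.I : ℝ) : ℂ)) / 2 := by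
    intro u
    have hA' : HasFDerivAt (fun z => ((fderiv ℝ g z 1 : ℝ) : ℂ))
        (Complex.ofRealCLM.comp (fderiv ℝ (fun z => fderiv ℝ g z 1) w)) w :=
      Complex.ofRealCLM.hasFDerivAt.comp w (hGv 1).hasFDerivAt
    have hB' : HasFDerivAt (fun z => ((fderiv ℝ g z Complex.I : ℝ) : ℂ))
        (Complex.ofRealCLM.comp (fderiv ℝ (fun z => fderiv ℝ g z Complex.I) w)) w :=
      Complex.ofRealCLM.hasFDerivAt.comp w (hGv Complex.I).hasFDerivAt
    have hQ := (hA'.sub (hB'.const_mul Complex.I)).const_smul ((2 : ℂ)⁻¹)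
    have hfun : (fun z =>
        (((fderiv ℝ g z 1 : ℝ) : ℂ) - Complex.I * ((fderiv ℝ g z Complex.I : ℝ) : ℂ)) / 2)
        = fun z => (2 : ℂ)⁻¹ • (((fderiv ℝ g z 1 : ℝ) : ℂ)
            - Complex.I * ((fderiv ℝ g z Complex.I : ℝ) : ℂ)) := by
      funext z; simp [smul_eq_mul]; ring
    have hQ' : HasFDerivAt (fun z => (2 : ℂ)⁻¹ • (((fderiv ℝ g z 1 : ℝ) : ℂ)
        - Complex.I * ((fderiv ℝ g z Complex.I : ℝ) : ℂ))) _ w := hQ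
    rw [hfd, hfun, hQ'.fderiv]
    simp [happ, smul_eq_mul]
    ring
  rw [hlap, hform Complex.I, hform 1, hsym Complex.I 1]
  constructor
  · intro h0
    have hxy : ((S 1 1 : ℝ) : ℂ) + ((S Complex.I Complex.I : ℝ) : ℂ) = 0 := by exact_mod_cast h0
    linear_combination (-Complex.I/2) * hxy + (((S 1 Complex.I : ℝ) : ℂ)/2) * Complex.I_sq
  · intro h
    have hxy : ((S 1 1 : ℝ) : ℂ) + ((S Complex.I Complex.I : ℝ) : ℂ) = 0 := by
      linear_combination (2*Complex.I) * h +
        (((S 1 1 : ℝ) : ℂ) + ((S Complex.I Complex.I : ℝ) : ℂ)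
          - Complex.I * ((S 1 Complex.I : ℝ) : ℂ)) * Complex.I_sq
    exact_mod_cast hxy

lemma holo_CR {h : ℂ → ℂ} {w : ℂ} (hh : DifferentiableAt ℂ h w) :
    fderiv ℝ h w Complex.I = Complex.I * fderiv ℝ h w 1 := by
  have h1 : fderiv ℝ h w = (fderiv ℂ h w).restrictScalars ℝ :=
    (hh.hasFDerivAt.restrictScalars ℝ).fderiv
  rw [h1]
  simp only [ContinuousLinearMap.coe_restrictScalars']
  calc (fderiv ℂ h w) Complex.I = (fderiv ℂ h w) (Complex.I • (1:ℂ)) := by norm_num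
    _ = Complex.I • (fderiv ℂ h w) 1 := map_smul _ _ _
    _ = Complex.I * (fderiv ℂ h w) 1 := rfl

lemma CR_holo {h : ℂ → ℂ} {w : ℂ} (hh : DifferentiableAt ℝ h w)
    (hcr : fderiv ℝ h w Complex.I = Complex.I * fderiv ℝ h w 1) :
    DifferentiableAt ℂ h w := by
  rw [differentiableAt_iff_restrictScalars ℝ hh]
  refine ⟨(fderiv ℝ h w 1) • ContinuousLinearMap.id ℂ ℂ, ?_⟩
  apply ContinuousLinearMap.ext
  intro z
  have hz : z = z.re • (1:ℂ) + z.im • Complex.I := by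
    simp [Complex.real_smul, Complex.re_add_im]
  have key : (fderiv ℝ h w) z = fderiv ℝ h w 1 * z := by
    conv_lhs => rw [hz]
    rw [map_add, map_smul, map_smul, hcr]
    simp only [Complex.real_smul, smul_eq_mul]
    conv_rhs => rw [← Complex.re_add_im z]
    ring
  simp [key]

noncomputable def Phi (μ a b : ℂ → ℂ) (i : Fin 4) : ℂ → ℂ :=
  fun z => μ z * W (a z) (b z) i

theorem stmt4 (U : Set ℂ) (hU : IsOpen U)
    (μ a b : ℂ → ℂ)
    (hμ : ContDiffOn ℝ (⊤ : ℕ∞) μ U) (ha : ContDiffOn ℝ (⊤ : ℕ∞) a U) (hb : ContDiffOn ℝ (⊤ : ℕ∞) b U)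
    (hμ0 : ∀ w ∈ U, μ w ≠ 0)
    (f : ℂ → Fin 4 → ℝ) (hf : ContDiffOn ℝ (⊤ : ℕ∞) f U)
    (hWei : ∀ w ∈ U, ∀ i, wirt (fun z => ((f z i : ℝ) : ℂ)) w = μ w * W (a w) (b w) i) :
    (∀ i : Fin 4, ∀ w ∈ U, lapC (fun z => f z i) w = 0) ↔
      (DifferentiableOn ℂ μ U ∧ DifferentiableOn ℂ a U ∧ DifferentiableOn ℂ b U) := by
  have key : ∀ i : Fin 4, ∀ w ∈ U, (lapC (fun z => f z i) w = 0 ↔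
      fderiv ℝ (Phi μ a b i) w Complex.I = Complex.I * fderiv ℝ (Phi μ a b i) w 1) := by
    intro i w hw
    exact lap_iff_CR hU hw (contDiffOn_pi.mp hf i) (fun z hz => hWei z hz i)
  constructor
  · intro hlap
    have hFholo : ∀ i : Fin 4, DifferentiableOn ℂ (Phi μ a b i) U := by
      intro i w hw
      have hμ' : DifferentiableAt ℝ μ w :=
        (hμ.differentiableOn (by simp)).differentiableAt (hU.mem_nhds hw)
      have ha' : DifferentiableAt ℝ a w :=
        (ha.differentiableOn (by simp)).differentiableAt (hU.mem_nhds hw)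
      have hb' : DifferentiableAt ℝ b w :=
        (hb.differentiableOn (by simp)).differentiableAt (hU.mem_nhds hw)
      have hreal : DifferentiableAt ℝ (Phi μ a b i) w := by
        fin_cases i <;> simp only [Phi, W]
        · exact hμ'.mul (ha'.add hb')
        · exact hμ'.mul ((differentiableAt_const _).add (ha'.mul hb'))
        · exact hμ'.mul ((differentiableAt_const _).mul ((differentiableAt_const _).sub (ha'.mul hb')))
        · exact hμ'.mul (ha'.sub hb')
      exact (CR_holo hreal ((key i w hw).1 (hlap i w hw))).differentiableWithinAt
    have hμd : DifferentiableOn ℂ μ U := by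
      apply DifferentiableOn.congr
        (f := fun z => (Phi μ a b 1 z - Complex.I * Phi μ a b 2 z) / 2)
      · exact ((hFholo 1).sub ((hFholo 2).const_mul Complex.I)).div_const 2
      · intro z hz
        simp only [Phi, W, Matrix.cons_val_one, Matrix.head_cons, Matrix.cons_val_two,
          Matrix.tail_cons, Matrix.cons_val_zero]
        linear_combination (μ z * (1 - a z * b z) / 2) * Complex.I_sq
    have had : DifferentiableOn ℂ a U := by
      apply DifferentiableOn.congr
        (f := fun z => ((Phi μ a b 0 z + Phi μ a b 3 z) / 2) / μ z)
      · exact (((hFholo 0).add (hFholo 3)).div_const 2).div hμd hμ0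
      · intro z hz
        have h0 := hμ0 z hz
        simp only [Phi, W, Matrix.cons_val_zero, Matrix.cons_val_three, Matrix.tail_cons,
          Matrix.head_cons, Matrix.cons_val_one, Matrix.cons_val_two]
        field_simp
        ring
    have hbd : DifferentiableOn ℂ b U := by
      apply DifferentiableOn.congr
        (f := fun z => ((Phi μ a b 0 z - Phi μ a b 3 z) / 2) / μ z)
      · exact (((hFholo 0).sub (hFholo 3)).div_const 2).div hμd hμ0
      · intro z hz
        have h0 := hμ0 z hz
        simp only [Phi, W, Matrix.cons_val_zero, Matrix.cons_val_three, Matrix.tail_cons,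
          Matrix.head_cons, Matrix.cons_val_one, Matrix.cons_val_two]
        field_simp
        ring
    exact ⟨hμd, had, hbd⟩
  · rintro ⟨hμd, had, hbd⟩ i w hw
    apply (key i w hw).2
    apply holo_CR
    have hμ' : DifferentiableAt ℂ μ w := hμd.differentiableAt (hU.mem_nhds hw)
    have ha' : DifferentiableAt ℂ a w := had.differentiableAt (hU.mem_nhds hw)
    have hb' : DifferentiableAt ℂ b w := hbd.differentiableAt (hU.mem_nhds hw)
    fin_cases i <;> simp only [Phi, W]
    · exact hμ'.mul (ha'.add hb')
    · exact hμ'.mul ((differentiableAt_const _).add (ha'.mul hb'))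
    · exact hμ'.mul ((differentiableAt_const _).mul ((differentiableAt_const _).sub (ha'.mul hb')))
    · exact hμ'.mul (ha'.sub hb')
end

section
/- Let U ⊆ ℂ be open, let a, b, μ : U → ℂ be holomorphic with μ(w) ≠ 0 and 1 − a(w)·conj(b(w)) ≠ 0 for all w ∈ U, and let f : U → ℝ⁴ be smooth with ∂_w f = μ·W(a,b). Set λ = 2|μ|·|1 − a·conj(b)| (a positive smooth real function). Then for all w ∈ U: ∂_w(∂_w f) − 2·(∂_w λ / λ)·∂_w f = (μ·a′/(1 − a·conj(b)))·L₀(b) + (μ·b′/(1 − b·conj(a)))·L₃(a), where a′, b′ are the complex derivatives of a, b. -/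
open ComplexConjugate

/-- The lightlike vector `L₀(b) = (1+|b|², b+conj b, −i(b−conj b), 1−|b|²)`. -/
noncomputable def L0 (b : ℂ) : Fin 4 → ℂ :=
  ![1 + (Complex.normSq b : ℂ), b + conj b, -Complex.I * (b - conj b),
    1 - (Complex.normSq b : ℂ)]

/-- The lightlike vector `L₃(a) = (1+|a|², a+conj a, −i(a−conj a), −1+|a|²)`. -/
noncomputable def L3 (a : ℂ) : Fin 4 → ℂ :=
  ![1 + (Complex.normSq a : ℂ), a + conj a, -Complex.I * (a - conj a),
    -1 + (Complex.normSq a : ℂ)]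

lemma wirt_congr {f g : ℂ → ℂ} {w : ℂ} (h : f =ᶠ[nhds w] g) : wirt f w = wirt g w := by
  unfold wirt; rw [h.fderiv_eq]

lemma fderiv_holo {g : ℂ → ℂ} {w : ℂ} (hg : DifferentiableAt ℂ g w) (c : ℂ) :
    fderiv ℝ g w c = c * deriv g w := by
  rw [hg.fderiv_restrictScalars ℝ]
  simp only [ContinuousLinearMap.coe_restrictScalars']
  rw [show c = c • (1:ℂ) by simp, ContinuousLinearMap.map_smul]
  simp [smul_eq_mul, fderiv_apply_one_eq_deriv, mul_assoc]

lemma wirt_of_holo {g : ℂ → ℂ} {w : ℂ} (hg : DifferentiableAt ℂ g w) :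
    wirt g w = deriv g w := by
  unfold wirt
  rw [fderiv_holo hg, fderiv_holo hg]
  have h := Complex.I_mul_I
  field_simp
  linear_combination (-(deriv g w)) * h

lemma wirt_conj_holo {g : ℂ → ℂ} {w : ℂ} (hg : DifferentiableAt ℂ g w) :
    wirt (fun z => conj (g z)) w = 0 := by
  unfold wirt
  have hco : (fun z => conj (g z)) = (Complex.conjCLE : ℂ → ℂ) ∘ g := rfl
  rw [hco, ContinuousLinearEquiv.comp_fderiv]
  simp only [ContinuousLinearMap.coe_comp', ContinuousLinearEquiv.coe_coe,
    Function.comp_apply, Complex.conjCLE_apply]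
  rw [fderiv_holo hg, fderiv_holo hg]
  simp only [one_mul, map_mul, Complex.conj_I]
  ring_nf
  rw [Complex.I_sq]
  ring

lemma wirt_mul {f g : ℂ → ℂ} {w : ℂ} (hf : DifferentiableAt ℝ f w)
    (hg : DifferentiableAt ℝ g w) :
    wirt (fun z => f z * g z) w = f w * wirt g w + wirt f w * g w := by
  unfold wirt
  rw [fderiv_fun_mul hf hg]
  simp [smul_eq_mul]
  ring

lemma wirt_const_sub {g : ℂ → ℂ} {w : ℂ} (c : ℂ) :
    wirt (fun z => c - g z) w = - wirt g w := by
  unfold wirt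
  rw [fderiv_const_sub]
  simp
  ring

lemma diffR_conj {g : ℂ → ℂ} {w : ℂ} (hg : DifferentiableAt ℝ g w) :
    DifferentiableAt ℝ (fun z => conj (g z)) w :=
  Complex.conjCLE.differentiable.differentiableAt.comp w hg

set_option maxHeartbeats 1000000 in
theorem stmt7 (U : Set ℂ) (hU : IsOpen U)
    (a b μ : ℂ → ℂ)
    (ha : DifferentiableOn ℂ a U) (hb : DifferentiableOn ℂ b U) (hμ : DifferentiableOn ℂ μ U)
    (hμ0 : ∀ w ∈ U, μ w ≠ 0) (hab : ∀ w ∈ U, 1 - a w * conj (b w) ≠ 0)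
    (f : ℂ → Fin 4 → ℝ) (hf : ContDiffOn ℝ (⊤ : ℕ∞) f U)
    (hWei : ∀ w ∈ U, ∀ i, wirt (fun z => ((f z i : ℝ) : ℂ)) w = μ w * W (a w) (b w) i)
    (lam : ℂ → ℝ)
    (hlam : ∀ w, lam w = 2 * ‖μ w‖ * ‖1 - a w * conj (b w)‖) :
    ∀ w ∈ U, ∀ i,
      wirt (fun z => wirt (fun z' => ((f z' i : ℝ) : ℂ)) z) w
          - 2 * (wirt (fun z => ((lam z : ℝ) : ℂ)) w / (lam w : ℂ))
            * wirt (fun z => ((f z i : ℝ) : ℂ)) w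
        = (μ w * deriv a w / (1 - a w * conj (b w))) * L0 (b w) i
          + (μ w * deriv b w / (1 - b w * conj (a w))) * L3 (a w) i := by
  intro w hw i
  have hn : U ∈ nhds w := hU.mem_nhds hw
  have haw : DifferentiableAt ℂ a w := ha.differentiableAt hn
  have hbw : DifferentiableAt ℂ b w := hb.differentiableAt hn
  have hμw : DifferentiableAt ℂ μ w := hμ.differentiableAt hn
  have hM : μ w ≠ 0 := hμ0 w hw
  have hMc : conj (μ w) ≠ 0 := by simpa using hM
  have hC : (1 : ℂ) - a w * conj (b w) ≠ 0 := hab w hw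
  have hCc : (1 : ℂ) - conj (a w) * b w ≠ 0 := by
    intro h
    apply hC
    have h2 := congrArg (starRingEnd ℂ) h
    simpa [map_sub, map_mul, mul_comm] using h2
  have haR : DifferentiableAt ℝ a w := haw.restrictScalars ℝ
  have hbR : DifferentiableAt ℝ b w := hbw.restrictScalars ℝ
  have hμR : DifferentiableAt ℝ μ w := hμw.restrictScalars ℝ
  have hcb : DifferentiableAt ℝ (fun z => conj (b z)) w := diffR_conj hbR
  have hca : DifferentiableAt ℝ (fun z => conj (a z)) w := diffR_conj haR
  have hcμ : DifferentiableAt ℝ (fun z => conj (μ z)) w := diffR_conj hμR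
  -- differentiability of lam
  have hHne : 2 * μ w * (1 - a w * conj (b w)) ≠ 0 :=
    mul_ne_zero (mul_ne_zero two_ne_zero hM) hC
  have hlamne : (lam w : ℂ) ≠ 0 := by
    simp only [Ne, Complex.ofReal_eq_zero]
    rw [hlam]
    exact mul_ne_zero (mul_ne_zero two_ne_zero (norm_ne_zero_iff.mpr hM))
      (norm_ne_zero_iff.mpr hC)
  have hPd : DifferentiableAt ℝ (fun z => ((lam z : ℝ) : ℂ)) w := by
    have hH : DifferentiableAt ℝ (fun z => 2 * μ z * (1 - a z * conj (b z))) w :=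
      ((differentiableAt_const (2:ℂ)).mul hμR).mul
        ((differentiableAt_const (1:ℂ)).sub (haR.mul hcb))
    have h1 : DifferentiableAt ℝ (fun z => ‖2 * μ z * (1 - a z * conj (b z))‖) w :=
      hH.norm ℂ hHne
    have h2 : DifferentiableAt ℝ
        (fun z => ((‖2 * μ z * (1 - a z * conj (b z))‖ : ℝ) : ℂ)) w :=
      Complex.ofRealCLM.differentiableAt.comp w h1
    apply h2.congr_of_eventuallyEq
    filter_upwards with z
    rw [hlam]
    norm_cast
    rw [norm_mul, norm_mul, Complex.norm_two]
  set Pf : ℂ → ℂ := fun z => ((lam z : ℝ) : ℂ) with hPf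
  -- lam squared identity
  have hPP : ∀ z, Pf z * Pf z
      = (4 * (μ z * conj (μ z))) * ((1 - a z * conj (b z)) * (1 - conj (a z) * b z)) := by
    intro z
    have h1 : lam z * lam z
        = 4 * Complex.normSq (μ z) * Complex.normSq (1 - a z * conj (b z)) := by
      rw [hlam, ← Complex.sq_norm, ← Complex.sq_norm]
      ring
    have h2 : Pf z * Pf z = ((lam z * lam z : ℝ) : ℂ) := by push_cast; rfl
    rw [h2, h1]
    push_cast
    rw [← Complex.mul_conj, ← Complex.mul_conj]
    simp only [map_sub, map_one, map_mul, Complex.conj_conj]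
  -- wirt values of building blocks
  have e1 : wirt (fun z => μ z * conj (μ z)) w = deriv μ w * conj (μ w) := by
    rw [wirt_mul hμR hcμ, wirt_conj_holo hμw, wirt_of_holo hμw]
    ring
  have e2 : wirt (fun z => a z * conj (b z)) w = deriv a w * conj (b w) := by
    rw [wirt_mul haR hcb, wirt_conj_holo hbw, wirt_of_holo haw]
    ring
  have e3 : wirt (fun z => conj (a z) * b z) w = conj (a w) * deriv b w := by
    rw [wirt_mul hca hbR, wirt_conj_holo haw, wirt_of_holo hbw]
    ring
  have e2' : wirt (fun z => (1:ℂ) - a z * conj (b z)) w = -(deriv a w * conj (b w)) := by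
    rw [wirt_const_sub, e2]
  have e3' : wirt (fun z => (1:ℂ) - conj (a z) * b z) w = -(conj (a w) * deriv b w) := by
    rw [wirt_const_sub, e3]
  have hF1d : DifferentiableAt ℝ (fun z => (4:ℂ) * (μ z * conj (μ z))) w :=
    (differentiableAt_const (4:ℂ)).mul (hμR.mul hcμ)
  have hF2d : DifferentiableAt ℝ
      (fun z => ((1:ℂ) - a z * conj (b z)) * ((1:ℂ) - conj (a z) * b z)) w :=
    ((differentiableAt_const (1:ℂ)).sub (haR.mul hcb)).mul
      ((differentiableAt_const (1:ℂ)).sub (hca.mul hbR))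
  have e0 : wirt (fun z => (4:ℂ) * (μ z * conj (μ z))) w = 4 * (deriv μ w * conj (μ w)) := by
    have hconst : wirt (fun _ : ℂ => (4:ℂ)) w = 0 := by unfold wirt; simp
    rw [wirt_mul (differentiableAt_const (4:ℂ)) (hμR.fun_mul hcμ), e1, hconst]
    ring
  have e4 : wirt (fun z => ((1:ℂ) - a z * conj (b z)) * ((1:ℂ) - conj (a z) * b z)) w
      = (1 - a w * conj (b w)) * (-(conj (a w) * deriv b w))
        + (-(deriv a w * conj (b w))) * (1 - conj (a w) * b w) := by
    rw [wirt_mul ((differentiableAt_const (1:ℂ)).fun_sub (haR.fun_mul hcb))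
      ((differentiableAt_const (1:ℂ)).fun_sub (hca.fun_mul hbR)), e2', e3']
  have hE : wirt (fun z => Pf z * Pf z) w
      = 4 * (μ w * conj (μ w))
          * ((1 - a w * conj (b w)) * (-(conj (a w) * deriv b w))
            + (-(deriv a w * conj (b w))) * (1 - conj (a w) * b w))
        + 4 * (deriv μ w * conj (μ w))
          * ((1 - a w * conj (b w)) * (1 - conj (a w) * b w)) := by
    rw [show (fun z => Pf z * Pf z)
        = fun z => ((4:ℂ) * (μ z * conj (μ z)))
            * (((1:ℂ) - a z * conj (b z)) * ((1:ℂ) - conj (a z) * b z)) from funext hPP]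
    rw [wirt_mul hF1d hF2d, e0, e4]
  have hW2 : wirt (fun z => Pf z * Pf z) w = 2 * Pf w * wirt Pf w := by
    rw [wirt_mul hPd hPd]
    ring
  -- the key value of the log-derivative term
  have hQ : 2 * (wirt Pf w / (lam w : ℂ))
      = deriv μ w / μ w - deriv a w * conj (b w) / (1 - a w * conj (b w))
        - conj (a w) * deriv b w / (1 - conj (a w) * b w) := by
    have hPfw : Pf w ≠ 0 := hlamne
    have hstep : 2 * (wirt Pf w / (lam w : ℂ))
        = wirt (fun z => Pf z * Pf z) w / (Pf w * Pf w) := by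
      rw [hW2]
      show 2 * (wirt Pf w / Pf w) = _
      field_simp
    rw [hstep, hE, hPP w]
    field_simp
    ring
  have hwf : wirt (fun z => ((f z i : ℝ) : ℂ)) w = μ w * W (a w) (b w) i := hWei w hw i
  have hnsb : ((Complex.normSq (b w) : ℝ) : ℂ) = b w * conj (b w) := (Complex.mul_conj _).symm
  have hnsa : ((Complex.normSq (a w) : ℝ) : ℂ) = a w * conj (a w) := (Complex.mul_conj _).symm
  have hCc' : (1:ℂ) - b w * conj (a w) ≠ 0 := by rw [mul_comm]; exact hCc
  fin_cases i
  · -- i = 0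
    have heq : (fun z => wirt (fun z' => ((f z' (0 : Fin 4) : ℝ) : ℂ)) z)
        =ᶠ[nhds w] (fun z => μ z * (a z + b z)) := by
      filter_upwards [hn] with z hz
      simpa [W] using hWei z hz 0
    have hd := hμw.hasDerivAt.fun_mul (haw.hasDerivAt.fun_add hbw.hasDerivAt)
    simp [W, L0, L3] at hwf ⊢
    rw [wirt_congr heq, wirt_of_holo hd.differentiableAt, hd.deriv, hwf, hQ, hnsb, hnsa]
    field_simp
    ring
  · -- i = 1
    have heq : (fun z => wirt (fun z' => ((f z' (1 : Fin 4) : ℝ) : ℂ)) z)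
        =ᶠ[nhds w] (fun z => μ z * (1 + a z * b z)) := by
      filter_upwards [hn] with z hz
      simpa [W] using hWei z hz 1
    have hd := hμw.hasDerivAt.fun_mul ((haw.hasDerivAt.fun_mul hbw.hasDerivAt).const_add 1)
    simp [W, L0, L3] at hwf ⊢
    rw [wirt_congr heq, wirt_of_holo hd.differentiableAt, hd.deriv, hwf, hQ]
    field_simp
    ring
  · -- i = 2
    have heq : (fun z => wirt (fun z' => ((f z' (2 : Fin 4) : ℝ) : ℂ)) z)
        =ᶠ[nhds w] (fun z => μ z * (Complex.I * (1 - a z * b z))) := by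
      filter_upwards [hn] with z hz
      simpa [W] using hWei z hz 2
    have hd := hμw.hasDerivAt.fun_mul
      (((haw.hasDerivAt.fun_mul hbw.hasDerivAt).const_sub 1).const_mul Complex.I)
    simp [W, L0, L3] at hwf ⊢
    rw [wirt_congr heq, wirt_of_holo hd.differentiableAt, hd.deriv, hwf, hQ]
    field_simp
    ring
  · -- i = 3
    have heq : (fun z => wirt (fun z' => ((f z' (3 : Fin 4) : ℝ) : ℂ)) z)
        =ᶠ[nhds w] (fun z => μ z * (a z - b z)) := by
      filter_upwards [hn] with z hz
      simpa [W] using hWei z hz 3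
    have hd := hμw.hasDerivAt.fun_mul (haw.hasDerivAt.fun_sub hbw.hasDerivAt)
    simp [W, L0, L3] at hwf ⊢
    rw [wirt_congr heq, wirt_of_holo hd.differentiableAt, hd.deriv, hwf, hQ, hnsb, hnsa]
    field_simp
    ring
end

section
/- Let U ⊆ ℂ be open and let a, b, μ : U → ℂ be holomorphic with μ(w) ≠ 0 and 1 − a(w)·conj(b(w)) ≠ 0 for all w ∈ U. Set λ² = 4·|μ|²·|1 − a·conj(b)|² and define K = −Δ(ln λ)/λ², where Δ = ∂²/∂u² + ∂²/∂v² is the Euclidean Laplacian on U. Then at every w ∈ U: K = Re( a′(w)·conj(b′(w))·(1 − conj(a(w))·b(w))² ) / ( |μ(w)|²·(1 − a(w)·conj(b(w)))³·(1 − conj(a(w))·b(w))³ ), where a′, b′ denote the complex derivatives of a, b (the denominator is the positive real number |μ|²·|1 − a·conj(b)|⁶). -/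
/-!
Write `F = 1 - a · conj b`, so that `λ = 2 ‖μ‖ ‖F‖`. Since `log ‖μ‖` is harmonic,
`Δ log λ = Δ log ‖F‖ = Re (ΔF / F - ((∂ᵤF)² + (∂ᵥF)²) / F²)`.
As `a`, `b` are holomorphic, `∂ᵤF = -(a' conj b + a conj b')`, `∂ᵥF = -i (a' conj b - a conj b')`
and `ΔF = -4 a' conj b'`; hence `(∂ᵤF)² + (∂ᵥF)² = 4 a a' conj b conj b'`, and with
`F + a conj b = 1` this gives `Δ log λ = -4 Re (a' conj b' / F²)`. Dividing by
`λ² = 4 ‖μ‖² ‖F‖²` and writing `1 / F² = conj F² / ‖F‖⁴` gives the formula for `K`.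
-/

open ComplexConjugate

open Complex InnerProductSpace Laplacian Filter Topology

section Calculus

variable {E : Type*} [NormedAddCommGroup E] [NormedSpace ℝ E]

theorem ContDiffAt.differentiableAt_fderiv_apply {F : Type*} [NormedAddCommGroup F]
    [NormedSpace ℝ F] {f : E → F} {w : E} (hf : ContDiffAt ℝ 2 f w) (v : E) :
    DifferentiableAt ℝ (fun z => fderiv ℝ f z v) w :=
  ((hf.fderiv_right (m := 1) le_rfl).differentiableAt one_ne_zero).clm_apply
    (differentiableAt_const v)

theorem fderiv_div_apply {𝕜 : Type*} [NontriviallyNormedField 𝕜] [NormedAlgebra ℝ 𝕜]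
    {f g : E → 𝕜} {z : E} (hf : DifferentiableAt ℝ f z) (hg : DifferentiableAt ℝ g z)
    (h0 : g z ≠ 0) (v : E) :
    fderiv ℝ (fun z => f z / g z) z v
      = (fderiv ℝ f z v * g z - f z * fderiv ℝ g z v) / g z ^ 2 := by
  have h : HasFDerivAt (fun z => f z * (g z)⁻¹) _ z :=
    hf.hasFDerivAt.mul ((hasFDerivAt_inv' h0).comp z hg.hasFDerivAt)
  simp only [div_eq_mul_inv, h.fderiv, ContinuousLinearMap.neg_comp, smul_neg, add_apply,
    neg_apply, smul_apply, ContinuousLinearMap.comp_apply, ContinuousLinearMap.mulLeftRight_apply,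
    smul_eq_mul]
  field_simp
  ring

theorem fderiv_log_norm_apply {f : E → ℂ} {z : E} (hf : DifferentiableAt ℝ f z) (h0 : f z ≠ 0)
    (v : E) : fderiv ℝ (fun z => Real.log ‖f z‖) z v = (fderiv ℝ f z v / f z).re := by
  have h := (hf.hasFDerivAt.norm_sq.log (by positivity)).const_mul (1 / 2 : ℝ)
  have e : (fun z => Real.log ‖f z‖) = fun z => 1 / 2 * Real.log (‖f z‖ ^ 2) := by
    ext z; rw [Real.log_pow]; ring
  rw [e, h.fderiv]
  simp only [one_div, Complex.sq_norm, smul_apply, ContinuousLinearMap.comp_apply,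
    coe_innerSL_apply, Complex.inner, mul_re, conj_re, conj_im, mul_neg, sub_neg_eq_add, smul_add,
    nsmul_eq_mul, Nat.cast_ofNat, smul_eq_mul, div_re]
  ring

theorem laplacian_complexPlane_apply {g : ℂ → E} {w : ℂ} (hg : ContDiffAt ℝ 2 g w) :
    Δ g w = fderiv ℝ (fun z => fderiv ℝ g z 1) w 1 + fderiv ℝ (fun z => fderiv ℝ g z I) w I := by
  have hd : DifferentiableAt ℝ (fderiv ℝ g) w :=
    (hg.fderiv_right (m := 1) le_rfl).differentiableAt one_ne_zero
  rw [laplacian_eq_iteratedFDeriv_complexPlane]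
  simp only [iteratedFDeriv_two_apply, fderiv_clm_apply hd (differentiableAt_const _)]
  simp

end Calculus

theorem lapC_eq_laplacian {g : ℂ → ℝ} {w : ℂ} (hg : ContDiffAt ℝ 2 g w) : lapC g w = Δ g w :=
  (laplacian_complexPlane_apply hg).symm

theorem laplacian_log_norm {f : ℂ → ℂ} {w : ℂ} (hf : ContDiffAt ℝ 2 f w) (h0 : f w ≠ 0) :
    Δ (fun z => Real.log ‖f z‖) w
      = (Δ f w / f w - (fderiv ℝ f w 1 ^ 2 + fderiv ℝ f w I ^ 2) / f w ^ 2).re := by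
  have hnear : ∀ᶠ z in 𝓝 w, DifferentiableAt ℝ f z ∧ f z ≠ 0 :=
    ((hf.eventually (by simp)).mono fun z hz => hz.differentiableAt two_ne_zero).and
      (hf.continuousAt.eventually_ne h0)
  have hsecond (v : ℂ) :
      fderiv ℝ (fun z => fderiv ℝ (fun z => Real.log ‖f z‖) z v) w v
        = ((fderiv ℝ (fun z => fderiv ℝ f z v) w v * f w - fderiv ℝ f w v * fderiv ℝ f w v)
            / f w ^ 2).re := by
    have hfirst : (fun z => fderiv ℝ (fun z => Real.log ‖f z‖) z v)
        =ᶠ[𝓝 w] fun z => reCLM (fderiv ℝ f z v / f z) :=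
      hnear.mono fun z hz => fderiv_log_norm_apply hz.1 hz.2 v
    have hquot : DifferentiableAt ℝ (fun z => fderiv ℝ f z v * (f z)⁻¹) w :=
      (hf.differentiableAt_fderiv_apply v).fun_mul ((hf.differentiableAt two_ne_zero).inv h0)
    have hre : HasFDerivAt (fun z => reCLM (fderiv ℝ f z v / f z)) _ w :=
      reCLM.hasFDerivAt.comp w hquot.hasFDerivAt
    rw [hfirst.fderiv_eq, hre.fderiv, ContinuousLinearMap.comp_apply, reCLM_apply]
    simp only [← div_eq_mul_inv]
    rw [fderiv_div_apply (hf.differentiableAt_fderiv_apply v) (hf.differentiableAt two_ne_zero) h0]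
  rw [laplacian_complexPlane_apply ((hf.norm ℝ h0).log (norm_ne_zero_iff.2 h0)),
    laplacian_complexPlane_apply hf, hsecond, hsecond, ← Complex.add_re]
  congr 1
  field_simp
  ring

theorem hasFDerivAt_mul_conj {a b : ℂ → ℂ} {z : ℂ} (ha : DifferentiableAt ℂ a z)
    (hb : DifferentiableAt ℂ b z) :
    HasFDerivAt (fun z => a z * conj (b z))
      (a z • (conjCLE.toContinuousLinearMap.comp ((fderiv ℂ b z).restrictScalars ℝ))
        + conj (b z) • (fderiv ℂ a z).restrictScalars ℝ) z :=
  (ha.hasFDerivAt.restrictScalars ℝ).mul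
    (conjCLE.hasFDerivAt.comp z (hb.hasFDerivAt.restrictScalars ℝ))

theorem fderiv_mul_conj_apply {a b : ℂ → ℂ} {z : ℂ} (ha : DifferentiableAt ℂ a z)
    (hb : DifferentiableAt ℂ b z) (v : ℂ) :
    fderiv ℝ (fun z => a z * conj (b z)) z v
      = deriv a z * v * conj (b z) + a z * conj (deriv b z * v) := by
  rw [(hasFDerivAt_mul_conj ha hb).fderiv]
  simp only [add_apply, smul_apply, ContinuousLinearMap.comp_apply,
    ContinuousLinearMap.coe_restrictScalars', fderiv_eq_smul_deriv, smul_eq_mul,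
    ContinuousLinearEquiv.coe_coe, ContinuousAlgEquiv.coeCLE_apply, conjCAE_apply, map_mul]
  ring

theorem contDiffAt_mul_conj {a b : ℂ → ℂ} {w : ℂ} (ha : AnalyticAt ℂ a w) (hb : AnalyticAt ℂ b w)
    {n : WithTop ℕ∞} : ContDiffAt ℝ n (fun z => a z * conj (b z)) w :=
  (ha.contDiffAt.restrict_scalars ℝ).mul
    (conjCLE.contDiff.contDiffAt.comp w (hb.contDiffAt.restrict_scalars ℝ))

theorem laplacian_mul_conj {a b : ℂ → ℂ} {w : ℂ} (ha : AnalyticAt ℂ a w) (hb : AnalyticAt ℂ b w) :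
    Δ (fun z => a z * conj (b z)) w = 4 * deriv a w * conj (deriv b w) := by
  have hsecond (v : ℂ) : fderiv ℝ (fun z => fderiv ℝ (fun z => a z * conj (b z)) z v) w v
      = deriv (deriv a) w * v * v * conj (b w) + 2 * (deriv a w * v * conj (deriv b w * v))
        + a w * conj (deriv (deriv b) w * v * v) := by
    have hfirst : (fun z => fderiv ℝ (fun z => a z * conj (b z)) z v) =ᶠ[𝓝 w]
        fun z => (deriv a z * v) * conj (b z) + a z * conj (deriv b z * v) :=
      (ha.eventually_analyticAt.and hb.eventually_analyticAt).mono fun z hz =>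
        fderiv_mul_conj_apply hz.1.differentiableAt hz.2.differentiableAt v
    have ha' : DifferentiableAt ℂ (fun z => deriv a z * v) w :=
      ha.deriv.differentiableAt.mul_const v
    have hb' : DifferentiableAt ℂ (fun z => deriv b z * v) w :=
      hb.deriv.differentiableAt.mul_const v
    rw [hfirst.fderiv_eq, fderiv_fun_add
      (hasFDerivAt_mul_conj ha' hb.differentiableAt).differentiableAt
      (hasFDerivAt_mul_conj ha.differentiableAt hb').differentiableAt,
      add_apply, fderiv_mul_conj_apply ha' hb.differentiableAt,
      fderiv_mul_conj_apply ha.differentiableAt hb', deriv_mul_const ha.deriv.differentiableAt,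
      deriv_mul_const hb.deriv.differentiableAt]
    ring
  rw [laplacian_complexPlane_apply (contDiffAt_mul_conj ha hb), hsecond, hsecond]
  simp only [map_mul, map_one, conj_I]
  -- the terms in `a''` and `b''` come with the factor `1 ^ 2 + I ^ 2 = 0`
  linear_combination (deriv (deriv a) w * conj (b w) - 2 * deriv a w * conj (deriv b w)
    + a w * conj (deriv (deriv b) w)) * I_sq

theorem laplacian_log_norm_one_sub_mul_conj {a b : ℂ → ℂ} {w : ℂ} (ha : AnalyticAt ℂ a w)
    (hb : AnalyticAt ℂ b w) (h0 : 1 - a w * conj (b w) ≠ 0) :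
    Δ (fun z => Real.log ‖1 - a z * conj (b z)‖) w
      = -4 * (deriv a w * conj (deriv b w) / (1 - a w * conj (b w)) ^ 2).re := by
  have hsmooth : ContDiffAt ℝ 2 (fun z => a z * conj (b z)) w := contDiffAt_mul_conj ha hb
  have hlap : Δ (fun z => 1 - a z * conj (b z)) w = -(4 * deriv a w * conj (deriv b w)) := by
    rw [← laplacian_mul_conj ha hb, show (fun z => 1 - a z * conj (b z))
      = (fun _ => (1 : ℂ)) - fun z => a z * conj (b z) from rfl,
      contDiffAt_const.laplacian_sub hsmooth, laplacian_const, Pi.zero_apply, zero_sub]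
  rw [laplacian_log_norm (contDiffAt_const.sub hsmooth) h0, hlap, fderiv_const_sub]
  simp only [neg_apply, fderiv_mul_conj_apply ha.differentiableAt hb.differentiableAt,
    map_mul, map_one, conj_I]
  rw [← re_ofReal_mul]
  congr 1
  push_cast
  field_simp
  linear_combination -(deriv a w * conj (b w) - a w * conj (deriv b w)) ^ 2 * I_sq

theorem log_conformalFactor_eventuallyEq {U : Set ℂ} (hU : IsOpen U) {F μ : ℂ → ℂ}
    (hμ0 : ∀ w ∈ U, μ w ≠ 0) (hF0 : ∀ w ∈ U, F w ≠ 0) {lam : ℂ → ℝ}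
    (hlamsq : ∀ w, lam w ^ 2 = 4 * ‖μ w‖ ^ 2 * ‖F w‖ ^ 2) (hlampos : ∀ w ∈ U, 0 < lam w)
    {w : ℂ} (hw : w ∈ U) :
    (fun z => Real.log (lam z)) =ᶠ[𝓝 w]
      (fun z => Real.log 2 + Real.log ‖μ z‖) + fun z => Real.log ‖F z‖ := by
  filter_upwards [hU.mem_nhds hw] with z hz
  have hlam : lam z = 2 * ‖μ z‖ * ‖F z‖ := by
    rw [← Real.sqrt_sq (hlampos z hz).le, hlamsq, show (4 : ℝ) = 2 ^ 2 by norm_num, ← mul_pow,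
      ← mul_pow, Real.sqrt_sq (by positivity)]
  rw [hlam, Real.log_mul (by simpa using hμ0 z hz) (norm_ne_zero_iff.2 (hF0 z hz)),
    Real.log_mul two_ne_zero (norm_ne_zero_iff.2 (hμ0 z hz))]
  rfl

theorem lapC_log_conformalFactor {a b μ : ℂ → ℂ} {lam : ℂ → ℝ} {w : ℂ} (ha : AnalyticAt ℂ a w)
    (hb : AnalyticAt ℂ b w) (hμ : AnalyticAt ℂ μ w) (hμ0 : μ w ≠ 0)
    (hab : 1 - a w * conj (b w) ≠ 0)
    (hlam : (fun z => Real.log (lam z)) =ᶠ[𝓝 w]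
      (fun z => Real.log 2 + Real.log ‖μ z‖) + fun z => Real.log ‖1 - a z * conj (b z)‖) :
    lapC (fun z => Real.log (lam z)) w
      = -4 * (deriv a w * conj (deriv b w) / (1 - a w * conj (b w)) ^ 2).re := by
  have hharm : HarmonicAt (fun z => Real.log 2 + Real.log ‖μ z‖) w :=
    (harmonicAt_const _).add (hμ.harmonicAt_log_norm hμ0)
  have hsmooth : ContDiffAt ℝ 2 (fun z => Real.log ‖1 - a z * conj (b z)‖) w :=
    ((contDiffAt_const.sub (contDiffAt_mul_conj ha hb)).norm ℝ hab).log (norm_ne_zero_iff.2 hab)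
  rw [lapC_eq_laplacian ((hharm.1.add hsmooth).congr_of_eventuallyEq hlam),
    (laplacian_congr_nhds hlam).eq_of_nhds, hharm.1.laplacian_add hsmooth, hharm.2.eq_of_nhds,
    Pi.zero_apply, zero_add, laplacian_log_norm_one_sub_mul_conj ha hb hab]

theorem re_div_sq (z F : ℂ) : (z / F ^ 2).re = (z * conj F ^ 2).re / normSq F ^ 2 := by
  rcases eq_or_ne F 0 with rfl | hF
  · simp
  rw [← div_ofReal_re]
  congr 1
  push_cast
  have hc : conj F ≠ 0 := (map_ne_zero _).2 hF
  rw [← mul_conj]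
  field_simp

theorem stmt8 (U : Set ℂ) (hU : IsOpen U)
    (a b μ : ℂ → ℂ)
    (ha : DifferentiableOn ℂ a U) (hb : DifferentiableOn ℂ b U) (hμ : DifferentiableOn ℂ μ U)
    (hμ0 : ∀ w ∈ U, μ w ≠ 0) (hab : ∀ w ∈ U, 1 - a w * conj (b w) ≠ 0)
    (lam : ℂ → ℝ)
    (hlamsq : ∀ w, lam w ^ 2
      = 4 * ‖μ w‖ ^ 2 * ‖1 - a w * conj (b w)‖ ^ 2)
    (hlampos : ∀ w ∈ U, 0 < lam w)
    (K : ℂ → ℝ)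
    (hK : ∀ w, K w = -(lapC (fun z => Real.log (lam z)) w) / lam w ^ 2) :
    ∀ w ∈ U, (K w : ℂ) =
      (((deriv a w * conj (deriv b w) * (1 - conj (a w) * b w) ^ 2).re : ℝ) : ℂ) /
        ((μ w * conj (μ w)) * (1 - a w * conj (b w)) ^ 3 * (1 - conj (a w) * b w) ^ 3) := by
  intro w hw
  have hF := hab w hw
  have hlap := lapC_log_conformalFactor (ha.analyticAt (hU.mem_nhds hw))
    (hb.analyticAt (hU.mem_nhds hw)) (hμ.analyticAt (hU.mem_nhds hw)) (hμ0 w hw) hF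
    (log_conformalFactor_eventuallyEq hU hμ0 hab hlamsq hlampos hw)
  have hconj : 1 - conj (a w) * b w = conj (1 - a w * conj (b w)) := by simp
  have hden : μ w * conj (μ w) * (1 - a w * conj (b w)) ^ 3 * (1 - conj (a w) * b w) ^ 3
      = ((normSq (μ w) * normSq (1 - a w * conj (b w)) ^ 3 : ℝ) : ℂ) := by
    push_cast
    rw [hconj, ← mul_conj, ← mul_conj]
    ring
  have hFsq : normSq (1 - a w * conj (b w)) ≠ 0 := by simpa using hF
  have hμsq : normSq (μ w) ≠ 0 := by simpa using hμ0 w hw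
  rw [hden, ← ofReal_div, hK, hlap, hlamsq, re_div_sq, Complex.sq_norm, Complex.sq_norm, hconj]
  congr 1
  field_simp
end

section
/- Let a, b ∈ ℂ with 1 − conj(a)·b ≠ 0, and set N₃ = L₀(b)/(1+|b|²) − L₃(a)/(1+|a|²) ∈ ℝ⁴. Then the 0-th component of N₃ is zero, ⟪N₃,N₃⟫ = 4·|1 − conj(a)·b|²/((1+|a|²)(1+|b|²)) > 0, and the last (index 3) component of the unit vector ν = N₃/√⟪N₃,N₃⟫ equals (1 − |ab|²)/( |1 − conj(a)·b| · √(1+|a|²) · √(1+|b|²) ). -/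
open ComplexConjugate

/-- The lightlike vector `L₀(b) = (1+|b|², b+conj b, −i(b−conj b), 1−|b|²)` of `ℝ⁴`. -/
noncomputable def L0r (b : ℂ) : Fin 4 → ℝ :=
  ![1 + ‖b‖ ^ 2, (b + conj b).re, (-Complex.I * (b - conj b)).re,
    1 - ‖b‖ ^ 2]

/-- The lightlike vector `L₃(a) = (1+|a|², a+conj a, −i(a−conj a), −1+|a|²)` of `ℝ⁴`. -/
noncomputable def L3r (a : ℂ) : Fin 4 → ℝ :=
  ![1 + ‖a‖ ^ 2, (a + conj a).re, (-Complex.I * (a - conj a)).re,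
    -1 + ‖a‖ ^ 2]

/-! `L₀(b)` and `L₃(a)` are null vectors, so by bilinearity `⟪N₃,N₃⟫` is
`−2⟪L₀(b),L₃(a)⟫ / ((1+|a|²)(1+|b|²))`, and expanding in real coordinates gives
`⟪L₀(b),L₃(a)⟫ = −2|1 − conj(a)·b|²`. The formula for `ν₃` is then arithmetic with square roots. -/

theorem mink_smul_sub_smul_self (s t : ℝ) (x y : Fin 4 → ℝ) :
    mink (s • x - t • y) (s • x - t • y)
      = s ^ 2 * mink x x - 2 * s * t * mink x y + t ^ 2 * mink y y := by
  simp only [mink, Pi.sub_apply, Pi.smul_apply, smul_eq_mul]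
  ring

theorem L0r_eq_re_im (b : ℂ) :
    L0r b = ![1 + ‖b‖ ^ 2, 2 * b.re, 2 * b.im, 1 - ‖b‖ ^ 2] := by
  simp [L0r, Complex.add_conj, Complex.sub_conj, ← mul_assoc]

theorem L3r_eq_re_im (a : ℂ) :
    L3r a = ![1 + ‖a‖ ^ 2, 2 * a.re, 2 * a.im, -1 + ‖a‖ ^ 2] := by
  simp [L3r, Complex.add_conj, Complex.sub_conj, ← mul_assoc]

theorem mink_L0r_self (b : ℂ) : mink (L0r b) (L0r b) = 0 := by
  simp only [mink, L0r_eq_re_im, Complex.sq_norm, Complex.normSq_apply, Matrix.cons_val_zero,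
    Matrix.cons_val_one, Matrix.cons_val]
  ring

theorem mink_L3r_self (a : ℂ) : mink (L3r a) (L3r a) = 0 := by
  simp only [mink, L3r_eq_re_im, Complex.sq_norm, Complex.normSq_apply, Matrix.cons_val_zero,
    Matrix.cons_val_one, Matrix.cons_val]
  ring

theorem mink_L0r_L3r (a b : ℂ) : mink (L0r b) (L3r a) = -2 * ‖1 - conj a * b‖ ^ 2 := by
  simp only [mink, L0r_eq_re_im, L3r_eq_re_im, Complex.sq_norm, Complex.normSq_apply,
    Matrix.cons_val_zero, Matrix.cons_val_one, Matrix.cons_val, Complex.sub_re, Complex.one_re,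
    Complex.mul_re, Complex.conj_re, Complex.conj_im, Complex.sub_im, Complex.one_im,
    Complex.mul_im]
  ring

theorem sqrt_four_mul_sq_div {c A B : ℝ} (hc : 0 ≤ c) (hA : 0 ≤ A) (hB : 0 ≤ B) :
    Real.sqrt (4 * c ^ 2 / (A * B)) = 2 * c / (Real.sqrt A * Real.sqrt B) := by
  rw [Real.sqrt_div' _ (mul_nonneg hA hB), Real.sqrt_mul hA,
    show (4 : ℝ) * c ^ 2 = (2 * c) ^ 2 by ring, Real.sqrt_sq (by positivity)]

theorem stmt9 (a b : ℂ) (h : 1 - conj a * b ≠ 0)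
    (N : Fin 4 → ℝ)
    (hN : N = (1 / (1 + ‖b‖ ^ 2)) • L0r b - (1 / (1 + ‖a‖ ^ 2)) • L3r a) :
    N 0 = 0 ∧
    mink N N = 4 * ‖1 - conj a * b‖ ^ 2
        / ((1 + ‖a‖ ^ 2) * (1 + ‖b‖ ^ 2)) ∧
    0 < mink N N ∧
    N 3 / Real.sqrt (mink N N)
      = (1 - ‖a * b‖ ^ 2)
        / (‖1 - conj a * b‖ * Real.sqrt (1 + ‖a‖ ^ 2)
            * Real.sqrt (1 + ‖b‖ ^ 2)) := by
  have hA : (0 : ℝ) < 1 + ‖a‖ ^ 2 := by positivity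
  have hB : (0 : ℝ) < 1 + ‖b‖ ^ 2 := by positivity
  have hmink : mink N N = 4 * ‖1 - conj a * b‖ ^ 2 / ((1 + ‖a‖ ^ 2) * (1 + ‖b‖ ^ 2)) := by
    rw [hN, mink_smul_sub_smul_self, mink_L0r_self, mink_L3r_self, mink_L0r_L3r]
    field_simp
    ring
  have hN3 : N 3 = 2 * (1 - ‖a * b‖ ^ 2) / ((1 + ‖a‖ ^ 2) * (1 + ‖b‖ ^ 2)) := by
    simp only [hN, L0r_eq_re_im, L3r_eq_re_im, Pi.sub_apply, Pi.smul_apply, smul_eq_mul,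
      Matrix.cons_val, norm_mul, mul_pow]
    field_simp
    ring
  refine ⟨?_, hmink, ?_, ?_⟩
  · simp [hN, L0r, L3r, hA.ne', hB.ne']
  · rw [hmink]
    have := norm_pos_iff.mpr h
    positivity
  · rw [hN3, hmink, sqrt_four_mul_sq_div (norm_nonneg _) hA.le hB.le]
    field_simp
    rw [Real.sq_sqrt hA.le, Real.sq_sqrt hB.le]
end

section
/- Let a : ℂ → ℂ be entire with a(w) ≠ 0 for all w, let c = α + iβ ∈ ℂ with c ∉ {0, 1, −1} and α² + β² ≠ 1, let X₀ ∈ ℝ⁴, and let f : ℂ → ℝ⁴ be a smooth map with f(0) = X₀ and ∂_w f(w) = (a(w) + c/a(w), 1 + c, i(1 − c), a(w) − c/a(w)) for all w (such f exists since the integrand is entire). Then: (i) ⟪f_u,f_u⟫ = ⟪f_v,f_v⟫ = 4·|1 − conj(c)·a(w)/conj(a(w))|² > 0 and ⟪f_u,f_v⟫ = 0 at every w, so f is a conformal spacelike immersion; (ii) every component of f is harmonic; (iii) the map w = u+iv ↦ (f¹(w), f²(w)) is given by (X₀¹ + 2((1+α)u − βv), X₀² + 2(βu + (α−1)v)), an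 affine bijection of ℝ² onto ℝ² (its linear part has determinant 4(α²+β²−1) ≠ 0), so f parametrizes an entire minimal graphic spacelike surface of the first type. -/
open ComplexConjugate

lemma wirt_parts (g : ℂ → ℝ) (w : ℂ) (hg : DifferentiableAt ℝ g w) (φ : ℂ)
    (h : wirt (fun z => ((g z : ℝ) : ℂ)) w = φ) :
    fderiv ℝ g w 1 = 2 * φ.re ∧ fderiv ℝ g w Complex.I = -2 * φ.im := by
  have h1 : fderiv ℝ (fun z => ((g z : ℝ) : ℂ)) w = Complex.ofRealCLM.comp (fderiv ℝ g w) :=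
    (Complex.ofRealCLM.hasFDerivAt.comp w hg.hasFDerivAt).fderiv
  rw [wirt, h1] at h
  rw [← h]
  simp [Complex.div_re, Complex.div_im, Complex.normSq_apply]
  constructor <;> ring

lemma proj_fderiv (f : ℂ → Fin 4 → ℝ) (hf : Differentiable ℝ f) (w v : ℂ) (i : Fin 4) :
    (fderiv ℝ f w v) i = fderiv ℝ (fun z => f z i) w v := by
  have := ((ContinuousLinearMap.proj (R := ℝ) (φ := fun _ : Fin 4 => ℝ) i).hasFDerivAt.comp w
      (hf w).hasFDerivAt).fderiv
  rw [show (fun z => f z i) = (ContinuousLinearMap.proj (R := ℝ) (φ := fun _ : Fin 4 => ℝ) i) ∘ f from rfl, this]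
  rfl

lemma proj_diff (f : ℂ → Fin 4 → ℝ) (hf : Differentiable ℝ f) (i : Fin 4) :
    Differentiable ℝ (fun z => f z i) := fun z =>
  ((ContinuousLinearMap.proj (R := ℝ) (φ := fun _ : Fin 4 => ℝ) i).hasFDerivAt.comp z
      (hf z).hasFDerivAt).differentiableAt

lemma lap_aux (F : ℂ → ℂ) (hF : Differentiable ℂ F) (w : ℂ) :
    fderiv ℝ (fun z => 2 * (F z).re) w 1 + fderiv ℝ (fun z => (-2 : ℝ) * (F z).im) w Complex.I = 0 := by
  have hD : ∀ z : ℂ, HasFDerivAt F (((ContinuousLinearMap.id ℂ ℂ).smulRight (deriv F z)).restrictScalars ℝ) z :=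
    fun z => ((hF z).hasDerivAt.hasFDerivAt).restrictScalars ℝ
  have h1 : ∀ z : ℂ, HasFDerivAt (fun z => 2 * (F z).re)
      ((2 : ℝ) • (Complex.reCLM.comp (((ContinuousLinearMap.id ℂ ℂ).smulRight (deriv F z)).restrictScalars ℝ))) z := by
    intro z
    have := (Complex.reCLM.hasFDerivAt.comp z (hD z)).const_smul (2 : ℝ)
    have e : (fun z => 2 * (F z).re) = (2 : ℝ) • ⇑Complex.reCLM ∘ F := by
      funext z; simp
    rw [e]; exact this
  have h2 : ∀ z : ℂ, HasFDerivAt (fun z => (-2 : ℝ) * (F z).im)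
      (((-2 : ℝ)) • (Complex.imCLM.comp (((ContinuousLinearMap.id ℂ ℂ).smulRight (deriv F z)).restrictScalars ℝ))) z := by
    intro z
    have := (Complex.imCLM.hasFDerivAt.comp z (hD z)).const_smul ((-2 : ℝ))
    have e : (fun z => (-2 : ℝ) * (F z).im) = (-2 : ℝ) • ⇑Complex.imCLM ∘ F := by
      funext z; simp
    rw [e]; exact this
  rw [(h1 w).fderiv, (h2 w).fderiv]
  simp [Complex.mul_re, Complex.mul_im]

lemma affine_of_partials (g : ℂ → ℝ) (hg : Differentiable ℝ g) (p q : ℝ)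
    (h1 : ∀ z : ℂ, fderiv ℝ g z 1 = p) (hI : ∀ z : ℂ, fderiv ℝ g z Complex.I = q) (w : ℂ) :
    g w = g 0 + p * w.re + q * w.im := by
  set ℓ : ℂ →L[ℝ] ℝ := p • Complex.reCLM + q • Complex.imCLM with hℓ
  have hℓv : ∀ v : ℂ, ℓ v = p * v.re + q * v.im := by
    intro v; simp [hℓ]
  have hD : ∀ z : ℂ, fderiv ℝ g z = ℓ := by
    intro z
    apply ContinuousLinearMap.ext
    intro v
    have hv : v = v.re • (1 : ℂ) + v.im • Complex.I := by
      simp [Complex.real_smul, Complex.re_add_im]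
    conv_lhs => rw [hv]
    rw [map_add, map_smul, map_smul, h1, hI, hℓv]
    simp
    ring
  have hh : Differentiable ℝ (fun z : ℂ => g z - (g 0 + ℓ z)) :=
    hg.sub ((ℓ.differentiable).const_add (g 0))
  have hz : ∀ z : ℂ, fderiv ℝ (fun z : ℂ => g z - (g 0 + ℓ z)) z = 0 := by
    intro z
    have h2 : HasFDerivAt (fun z : ℂ => g 0 + ℓ z) ℓ z := ℓ.hasFDerivAt.const_add (g 0)
    rw [show (fun z : ℂ => g z - (g 0 + ℓ z)) = g - fun z => g 0 + ℓ z from rfl,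
      ((hg z).hasFDerivAt.sub h2).fderiv, hD z, sub_self]
  have := is_const_of_fderiv_eq_zero hh hz w 0
  have h0 : ℓ (0 : ℂ) = 0 := by simp
  rw [h0] at this
  have := sub_eq_sub_iff_sub_eq_sub.mp this
  have : g w = g 0 + ℓ w := by linarith [this]
  rw [this, hℓv]
  ring

lemma calc1 (A : ℂ) (hA : A ≠ 0) (α β : ℝ) :
    -(2 * (A + ((α:ℂ)+(β:ℂ)*Complex.I) / A).re)^2 + (2 * ((1:ℂ) + ((α:ℂ)+(β:ℂ)*Complex.I)).re)^2
      + (2 * (Complex.I * (1 - ((α:ℂ)+(β:ℂ)*Complex.I))).re)^2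
      + (2 * (A - ((α:ℂ)+(β:ℂ)*Complex.I) / A).re)^2
    = 4 * ‖1 - conj ((α:ℂ)+(β:ℂ)*Complex.I) * A / conj A‖ ^ 2 := by
  have hn : Complex.normSq A ≠ 0 := (Complex.normSq_pos.mpr hA).ne'
  rw [Complex.sq_norm]
  simp [Complex.normSq_apply, Complex.div_re, Complex.div_im, Complex.add_re, Complex.add_im,
    Complex.sub_re, Complex.sub_im, Complex.mul_re, Complex.mul_im, Complex.normSq_conj]
  rw [Complex.normSq_apply] at hn
  have hn' : A.re ^ 2 + A.im ^ 2 ≠ 0 := by rw [sq, sq]; exact hn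
  field_simp
  ring

lemma calc2 (A : ℂ) (hA : A ≠ 0) (α β : ℝ) :
    -(-2 * (A + ((α:ℂ)+(β:ℂ)*Complex.I) / A).im)^2 + (-2 * ((1:ℂ) + ((α:ℂ)+(β:ℂ)*Complex.I)).im)^2
      + (-2 * (Complex.I * (1 - ((α:ℂ)+(β:ℂ)*Complex.I))).im)^2
      + (-2 * (A - ((α:ℂ)+(β:ℂ)*Complex.I) / A).im)^2
    = 4 * ‖1 - conj ((α:ℂ)+(β:ℂ)*Complex.I) * A / conj A‖ ^ 2 := by
  have hn : Complex.normSq A ≠ 0 := (Complex.normSq_pos.mpr hA).ne'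
  rw [Complex.sq_norm]
  simp [Complex.normSq_apply, Complex.div_re, Complex.div_im, Complex.add_re, Complex.add_im,
    Complex.sub_re, Complex.sub_im, Complex.mul_re, Complex.mul_im, Complex.normSq_conj]
  rw [Complex.normSq_apply] at hn
  have hn' : A.re ^ 2 + A.im ^ 2 ≠ 0 := by rw [sq, sq]; exact hn
  field_simp
  ring

lemma calc3 (A : ℂ) (hA : A ≠ 0) (α β : ℝ) :
    -((2 * (A + ((α:ℂ)+(β:ℂ)*Complex.I) / A).re) * (-2 * (A + ((α:ℂ)+(β:ℂ)*Complex.I) / A).im))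
      + (2 * ((1:ℂ) + ((α:ℂ)+(β:ℂ)*Complex.I)).re) * (-2 * ((1:ℂ) + ((α:ℂ)+(β:ℂ)*Complex.I)).im)
      + (2 * (Complex.I * (1 - ((α:ℂ)+(β:ℂ)*Complex.I))).re) * (-2 * (Complex.I * (1 - ((α:ℂ)+(β:ℂ)*Complex.I))).im)
      + (2 * (A - ((α:ℂ)+(β:ℂ)*Complex.I) / A).re) * (-2 * (A - ((α:ℂ)+(β:ℂ)*Complex.I) / A).im)
    = 0 := by
  have hn : Complex.normSq A ≠ 0 := (Complex.normSq_pos.mpr hA).ne'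
  simp [Complex.div_re, Complex.div_im, Complex.add_re, Complex.add_im,
    Complex.sub_re, Complex.sub_im, Complex.mul_re, Complex.mul_im]
  rw [Complex.normSq_apply] at hn ⊢
  have hn' : A.re ^ 2 + A.im ^ 2 ≠ 0 := by rw [sq, sq]; exact hn
  field_simp
  ring

lemma pos_aux (A : ℂ) (hA : A ≠ 0) (α β : ℝ) (hmod : α^2+β^2 ≠ 1) :
    0 < 4 * ‖1 - conj ((α:ℂ)+(β:ℂ)*Complex.I) * A / conj A‖ ^ 2 := by
  set c : ℂ := (α:ℂ)+(β:ℂ)*Complex.I with hc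
  have hz : (1:ℂ) - conj c * A / conj A ≠ 0 := by
    intro h
    have h2 : conj c * A / conj A = 1 := (sub_eq_zero.mp h).symm
    have h3 := congrArg norm h2
    rw [norm_div, norm_mul, Complex.norm_conj, Complex.norm_conj, mul_div_assoc,
      div_self (by simpa using hA), mul_one, norm_one] at h3
    apply hmod
    have h4 : Complex.normSq c = 1 := by
      rw [← Complex.sq_norm, h3]; norm_num
    rw [hc] at h4
    simp [Complex.normSq_apply] at h4
    nlinarith [h4]
  have h5 : 0 < ‖1 - conj c * A / conj A‖ := norm_pos_iff.mpr hz
  have := pow_pos h5 2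
  linarith

lemma bij_aux (α β X1 X2 : ℝ) (hd : α^2 + β^2 - 1 ≠ 0) :
    Function.Bijective (fun w : ℂ =>
      ((X1 + 2*((1+α)*w.re - β*w.im), X2 + 2*(β*w.re + (α-1)*w.im)) : ℝ × ℝ)) := by
  rw [Function.bijective_iff_has_inverse]
  refine ⟨fun p => Complex.mk ((2*(α-1)*(p.1 - X1) + 2*β*(p.2 - X2))/(4*(α^2+β^2-1)))
      ((-2*β*(p.1 - X1) + 2*(1+α)*(p.2 - X2))/(4*(α^2+β^2-1))), ?_, ?_⟩
  · intro w
    apply Complex.ext <;> (simp only []; field_simp; ring)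
  · intro p
    apply Prod.ext <;> (simp only []; field_simp; ring)

theorem stmt11 (a : ℂ → ℂ) (ha : Differentiable ℂ a) (ha0 : ∀ w : ℂ, a w ≠ 0)
    (α β : ℝ) (c : ℂ) (hc : c = (α : ℂ) + (β : ℂ) * Complex.I)
    (hc0 : c ≠ 0) (hc1 : c ≠ 1) (hcm1 : c ≠ -1) (hmod : α ^ 2 + β ^ 2 ≠ 1)
    (X₀ : Fin 4 → ℝ) (f : ℂ → Fin 4 → ℝ)
    (hf : ContDiff ℝ (⊤ : ℕ∞) f) (hf0 : f 0 = X₀)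
    (hWei : ∀ w : ℂ, ∀ i : Fin 4,
      wirt (fun z => ((f z i : ℝ) : ℂ)) w
        = ![a w + c / a w, 1 + c, Complex.I * (1 - c), a w - c / a w] i) :
    -- (i) f is a conformal spacelike immersion
    (∀ w : ℂ,
      mink (fderiv ℝ f w 1) (fderiv ℝ f w 1)
          = 4 * ‖1 - conj c * a w / conj (a w)‖ ^ 2 ∧
      mink (fderiv ℝ f w Complex.I) (fderiv ℝ f w Complex.I)
          = 4 * ‖1 - conj c * a w / conj (a w)‖ ^ 2 ∧
      0 < 4 * ‖1 - conj c * a w / conj (a w)‖ ^ 2 ∧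
      mink (fderiv ℝ f w 1) (fderiv ℝ f w Complex.I) = 0) ∧
    -- (ii) every component of f is harmonic
    (∀ i : Fin 4, ∀ w : ℂ, lapC (fun z => f z i) w = 0) ∧
    -- (iii) the projection (f¹, f²) is an explicit affine bijection of ℝ²
    (∀ w : ℂ,
      f w 1 = X₀ 1 + 2 * ((1 + α) * w.re - β * w.im) ∧
      f w 2 = X₀ 2 + 2 * (β * w.re + (α - 1) * w.im)) ∧
    Function.Bijective (fun w : ℂ => ((f w 1, f w 2) : ℝ × ℝ)) ∧
    4 * (α ^ 2 + β ^ 2 - 1) ≠ 0 := by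
  have hfd : Differentiable ℝ f := hf.differentiable (by simp)
  have hgi : ∀ i : Fin 4, Differentiable ℝ (fun z => f z i) := proj_diff f hfd
  have key : ∀ (w : ℂ) (i : Fin 4),
      fderiv ℝ (fun z => f z i) w 1
        = 2 * ((![a w + c / a w, 1 + c, Complex.I * (1 - c), a w - c / a w] i)).re ∧
      fderiv ℝ (fun z => f z i) w Complex.I
        = -2 * ((![a w + c / a w, 1 + c, Complex.I * (1 - c), a w - c / a w] i)).im :=
    fun w i => wirt_parts _ w (hgi i w) _ (hWei w i)
  have h3 : ∀ w : ℂ,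
      f w 1 = X₀ 1 + 2 * ((1 + α) * w.re - β * w.im) ∧
      f w 2 = X₀ 2 + 2 * (β * w.re + (α - 1) * w.im) := by
    intro w
    constructor
    · have hp : ∀ z : ℂ, fderiv ℝ (fun z' => f z' 1) z 1 = 2 * (1 + α) := by
        intro z
        rw [(key z 1).1]
        simp [hc]
      have hq : ∀ z : ℂ, fderiv ℝ (fun z' => f z' 1) z Complex.I = -2 * β := by
        intro z
        rw [(key z 1).2]
        simp [hc]
      have := affine_of_partials (fun z => f z 1) (hgi 1) (2 * (1 + α)) (-2 * β) hp hq w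
      rw [this, hf0]
      ring
    · have hp : ∀ z : ℂ, fderiv ℝ (fun z' => f z' 2) z 1 = 2 * β := by
        intro z
        rw [(key z 2).1]
        simp [hc]
      have hq : ∀ z : ℂ, fderiv ℝ (fun z' => f z' 2) z Complex.I = 2 * (α - 1) := by
        intro z
        rw [(key z 2).2]
        simp [hc]
        ring
      have := affine_of_partials (fun z => f z 2) (hgi 2) (2 * β) (2 * (α - 1)) hp hq w
      rw [this, hf0]
      ring
  refine ⟨?_, ?_, h3, ?_, mul_ne_zero (by norm_num) (sub_ne_zero.mpr hmod)⟩
  · -- part (i)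
    intro w
    have hA := ha0 w
    have e0 := key w 0
    have e1 := key w 1
    have e2 := key w 2
    have e3 := key w 3
    simp only [Matrix.cons_val_zero, Matrix.cons_val_one, Matrix.head_cons,
      Matrix.cons_val_two, Matrix.tail_cons, Matrix.cons_val_three] at e0 e1 e2 e3
    rw [hc] at e0 e1 e2 e3 ⊢
    refine ⟨?_, ?_, pos_aux (a w) hA α β hmod, ?_⟩
    · rw [mink, proj_fderiv f hfd w 1 0, proj_fderiv f hfd w 1 1, proj_fderiv f hfd w 1 2,
        proj_fderiv f hfd w 1 3, e0.1, e1.1, e2.1, e3.1]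
      linear_combination calc1 (a w) hA α β
    · rw [mink, proj_fderiv f hfd w Complex.I 0, proj_fderiv f hfd w Complex.I 1,
        proj_fderiv f hfd w Complex.I 2, proj_fderiv f hfd w Complex.I 3,
        e0.2, e1.2, e2.2, e3.2]
      linear_combination calc2 (a w) hA α β
    · rw [mink, proj_fderiv f hfd w 1 0, proj_fderiv f hfd w 1 1, proj_fderiv f hfd w 1 2,
        proj_fderiv f hfd w 1 3, proj_fderiv f hfd w Complex.I 0, proj_fderiv f hfd w Complex.I 1,
        proj_fderiv f hfd w Complex.I 2, proj_fderiv f hfd w Complex.I 3,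
        e0.1, e1.1, e2.1, e3.1, e0.2, e1.2, e2.2, e3.2]
      linear_combination calc3 (a w) hA α β
  · -- part (ii)
    intro i w
    have hF : Differentiable ℂ (fun z => ![a z + c / a z, 1 + c, Complex.I * (1 - c), a z - c / a z] i) := by
      fin_cases i
      · exact ha.add ((differentiable_const c).div ha ha0)
      · simp
      · simp
      · exact ha.sub ((differentiable_const c).div ha ha0)
    have eu : (fun z => fderiv ℝ (fun z' => f z' i) z 1)
        = fun z => 2 * ((![a z + c / a z, 1 + c, Complex.I * (1 - c), a z - c / a z] i)).re :=
      funext fun z => (key z i).1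
    have ev : (fun z => fderiv ℝ (fun z' => f z' i) z Complex.I)
        = fun z => (-2 : ℝ) * ((![a z + c / a z, 1 + c, Complex.I * (1 - c), a z - c / a z] i)).im :=
      funext fun z => (key z i).2
    rw [lapC, eu, ev]
    exact lap_aux _ hF w
  · -- bijectivity
    have heq : (fun w : ℂ => ((f w 1, f w 2) : ℝ × ℝ))
        = fun w : ℂ => ((X₀ 1 + 2*((1+α)*w.re - β*w.im), X₀ 2 + 2*(β*w.re + (α-1)*w.im)) : ℝ × ℝ) :=
      funext fun w => by rw [(h3 w).1, (h3 w).2]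
    rw [heq]
    exact bij_aux α β (X₀ 1) (X₀ 2) (sub_ne_zero.mpr hmod)
end

section
/- Let a : ℂ → ℂ be entire with a(w) ≠ 0 for all w, let c = α + iβ ∈ ℂ with β ≠ 0, let X₀ ∈ ℝ⁴, and let f : ℂ → ℝ⁴ be a smooth map with f(0) = X₀ and ∂_w f(w) = (1 + c, 1/a(w) + c·a(w), i(1/a(w) − c·a(w)), 1 − c) for all w (such f exists since the integrand is entire). Then: (i) ⟪f_u,f_u⟫ = ⟪f_v,f_v⟫ = (4/|a(w)|²)·|1 − conj(c)·|a(w)|²|² > 0 and ⟪f_u,f_v⟫ = 0 at every w, so f is a conformal spacelike immersion; (ii) every component of f is harmonic; (iii) the map w = u+iv ↦ (f⁰(w), f³(w)) is given by (X₀⁰ + 2((1+α)u − βv), X₀³ + 2((1−α)u + βv)), an affine bijection of ℝ² onto ℝ² (its linear part has determinant 8β ≠ 0), so f parametrizes an entire minimal graphic spacelike surface of the second type. -/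
open ComplexConjugate

/-- The Weierstrass integrand. -/
noncomputable def Phi15 (a : ℂ → ℂ) (c : ℂ) (i : Fin 4) (w : ℂ) : ℂ :=
  ![1 + c, 1 / a w + c * a w, Complex.I * (1 / a w - c * a w), 1 - c] i

lemma Phi15_diff (a : ℂ → ℂ) (ha : Differentiable ℂ a) (ha0 : ∀ w, a w ≠ 0) (c : ℂ)
    (i : Fin 4) : Differentiable ℂ (Phi15 a c i) := by
  have h1 : Differentiable ℂ (fun w => 1 / a w) := (differentiable_const 1).div ha ha0
  have h2 : Differentiable ℂ (fun w => c * a w) := ha.const_mul c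
  fin_cases i <;> simp only [Phi15, Matrix.cons_val_zero, Matrix.cons_val_one,
    Matrix.head_cons, Matrix.cons_val_two, Matrix.tail_cons, Matrix.cons_val_three]
  · exact differentiable_const _
  · exact h1.add h2
  · exact (h1.sub h2).const_mul _
  · exact differentiable_const _

lemma decompCLM (L : ℂ →L[ℝ] ℝ) (v : ℂ) : L v = v.re * L 1 + v.im * L Complex.I := by
  have hv : (v.re : ℝ) • (1:ℂ) + (v.im : ℝ) • Complex.I = v := by
    simp [Complex.real_smul, Complex.re_add_im]
  conv_lhs => rw [← hv]
  rw [map_add, map_smul, map_smul]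
  simp [smul_eq_mul]

lemma const_partials (g : ℂ → ℝ) (hg : Differentiable ℝ g) (p q : ℝ)
    (h1 : ∀ z, fderiv ℝ g z 1 = p) (hI : ∀ z, fderiv ℝ g z Complex.I = q) (w : ℂ) :
    g w = g 0 + p * w.re + q * w.im := by
  set L : ℂ →L[ℝ] ℝ := p • Complex.reCLM + q • Complex.imCLM with hL
  have hLd : Differentiable ℝ (fun z : ℂ => L z) := L.differentiable
  have hh : Differentiable ℝ (fun z : ℂ => g z - L z) := hg.sub hLd
  have hz : ∀ z : ℂ, fderiv ℝ (fun z : ℂ => g z - L z) z = 0 := by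
    intro z
    have hfd : fderiv ℝ (fun z : ℂ => g z - L z) z = fderiv ℝ g z - L := by
      rw [fderiv_fun_sub (hg z) (hLd z), L.fderiv]
    ext v
    rw [hfd]
    simp only [ContinuousLinearMap.sub_apply, ContinuousLinearMap.zero_apply]
    rw [decompCLM (fderiv ℝ g z) v, decompCLM L v, h1 z, hI z]
    simp [hL, ContinuousLinearMap.smul_apply, Complex.reCLM_apply, Complex.imCLM_apply,
      Complex.I_re, Complex.I_im]
  have := is_const_of_fderiv_eq_zero hh hz w 0
  simp only [hL, ContinuousLinearMap.add_apply, ContinuousLinearMap.smul_apply,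
    Complex.reCLM_apply, Complex.imCLM_apply, Complex.zero_re, Complex.zero_im] at this
  simp only [smul_eq_mul] at this
  linarith

lemma wirt_real (g : ℂ → ℝ) (w : ℂ) (hg : DifferentiableAt ℝ g w) (Φ : ℂ)
    (h : wirt (fun z => ((g z : ℝ) : ℂ)) w = Φ) :
    fderiv ℝ g w 1 = 2 * Φ.re ∧ fderiv ℝ g w Complex.I = -2 * Φ.im := by
  have hco : fderiv ℝ (fun z => ((g z : ℝ) : ℂ)) w
      = Complex.ofRealCLM.comp (fderiv ℝ g w) :=
    (Complex.ofRealCLM.hasFDerivAt.comp w hg.hasFDerivAt).fderiv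
  rw [wirt, hco] at h
  simp only [ContinuousLinearMap.comp_apply, Complex.ofRealCLM_apply] at h
  rw [Complex.ext_iff] at h
  obtain ⟨h1, h2⟩ := h
  simp [Complex.div_re, Complex.div_im, Complex.normSq_apply, Complex.sub_re, Complex.sub_im,
    Complex.mul_re, Complex.mul_im, Complex.I_re, Complex.I_im, Complex.ofReal_re,
    Complex.ofReal_im] at h1 h2
  constructor <;> linarith

lemma mink_uu (α β : ℝ) (A : ℂ) (hA : A ≠ 0) (c : ℂ)
    (hc : c = (α : ℂ) + (β : ℂ) * Complex.I) :
    -(2 * ((1:ℂ) + c).re * (2 * ((1:ℂ) + c).re))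
      + 2 * (1 / A + c * A).re * (2 * (1 / A + c * A).re)
      + 2 * (Complex.I * (1 / A - c * A)).re * (2 * (Complex.I * (1 / A - c * A)).re)
      + 2 * ((1:ℂ) - c).re * (2 * ((1:ℂ) - c).re)
    = (4 / ‖A‖ ^ 2)
        * ‖1 - conj c * ((‖A‖ ^ 2 : ℝ) : ℂ)‖ ^ 2 := by
  have hn : Complex.normSq A ≠ 0 := by simpa using hA
  subst hc
  simp only [Complex.sq_norm, Complex.normSq_apply, Complex.add_re, Complex.add_im,
    Complex.one_re, Complex.one_im, Complex.mul_re, Complex.mul_im, Complex.I_re,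
    Complex.I_im, Complex.ofReal_re, Complex.ofReal_im, Complex.sub_re, Complex.sub_im,
    Complex.div_re, Complex.div_im, Complex.normSq_apply, map_add, map_mul, Complex.conj_re,
    Complex.conj_im, Complex.conj_I, Complex.conj_ofReal, Complex.neg_re, Complex.neg_im]
  have hn2 : A.re * A.re + A.im * A.im ≠ 0 := by
    rwa [Complex.normSq_apply] at hn
  rw [← sub_eq_zero]
  field_simp [hn2, show A.re ^ 2 + A.im ^ 2 ≠ 0 by simpa [pow_two] using hn2]
  ring

lemma mink_vv (α β : ℝ) (A : ℂ) (hA : A ≠ 0) (c : ℂ)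
    (hc : c = (α : ℂ) + (β : ℂ) * Complex.I) :
    -(-2 * ((1:ℂ) + c).im * (-2 * ((1:ℂ) + c).im))
      + -2 * (1 / A + c * A).im * (-2 * (1 / A + c * A).im)
      + -2 * (Complex.I * (1 / A - c * A)).im * (-2 * (Complex.I * (1 / A - c * A)).im)
      + -2 * ((1:ℂ) - c).im * (-2 * ((1:ℂ) - c).im)
    = (4 / ‖A‖ ^ 2)
        * ‖1 - conj c * ((‖A‖ ^ 2 : ℝ) : ℂ)‖ ^ 2 := by
  have hn : Complex.normSq A ≠ 0 := by simpa using hA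
  subst hc
  simp only [Complex.sq_norm, Complex.normSq_apply, Complex.add_re, Complex.add_im,
    Complex.one_re, Complex.one_im, Complex.mul_re, Complex.mul_im, Complex.I_re,
    Complex.I_im, Complex.ofReal_re, Complex.ofReal_im, Complex.sub_re, Complex.sub_im,
    Complex.div_re, Complex.div_im, Complex.normSq_apply, map_add, map_mul, Complex.conj_re,
    Complex.conj_im, Complex.conj_I, Complex.conj_ofReal, Complex.neg_re, Complex.neg_im]
  have hn2 : A.re * A.re + A.im * A.im ≠ 0 := by
    rwa [Complex.normSq_apply] at hn
  rw [← sub_eq_zero]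
  field_simp [hn2, show A.re ^ 2 + A.im ^ 2 ≠ 0 by simpa [pow_two] using hn2]
  ring

lemma mink_uv (α β : ℝ) (A : ℂ) (hA : A ≠ 0) (c : ℂ)
    (hc : c = (α : ℂ) + (β : ℂ) * Complex.I) :
    -(2 * ((1:ℂ) + c).re * (-2 * ((1:ℂ) + c).im))
      + 2 * (1 / A + c * A).re * (-2 * (1 / A + c * A).im)
      + 2 * (Complex.I * (1 / A - c * A)).re * (-2 * (Complex.I * (1 / A - c * A)).im)
      + 2 * ((1:ℂ) - c).re * (-2 * ((1:ℂ) - c).im) = 0 := by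
  have hn : Complex.normSq A ≠ 0 := by simpa using hA
  subst hc
  simp only [Complex.add_re, Complex.add_im,
    Complex.one_re, Complex.one_im, Complex.mul_re, Complex.mul_im, Complex.I_re,
    Complex.I_im, Complex.ofReal_re, Complex.ofReal_im, Complex.sub_re, Complex.sub_im,
    Complex.div_re, Complex.div_im, Complex.normSq_apply, Complex.neg_re, Complex.neg_im]
  have hn2 : A.re * A.re + A.im * A.im ≠ 0 := by
    rwa [Complex.normSq_apply] at hn
  rw [← sub_eq_zero]
  field_simp [hn2, show A.re ^ 2 + A.im ^ 2 ≠ 0 by simpa [pow_two] using hn2]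
  ring

theorem stmt15 (a : ℂ → ℂ) (ha : Differentiable ℂ a) (ha0 : ∀ w : ℂ, a w ≠ 0)
    (α β : ℝ) (c : ℂ) (hc : c = (α : ℂ) + (β : ℂ) * Complex.I) (hβ : β ≠ 0)
    (X₀ : Fin 4 → ℝ) (f : ℂ → Fin 4 → ℝ)
    (hf : ContDiff ℝ (⊤ : ℕ∞) f) (hf0 : f 0 = X₀)
    (hWei : ∀ w : ℂ, ∀ i : Fin 4,
      wirt (fun z => ((f z i : ℝ) : ℂ)) w
        = ![1 + c, 1 / a w + c * a w, Complex.I * (1 / a w - c * a w), 1 - c] i) :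
    -- (i) f is a conformal spacelike immersion
    (∀ w : ℂ,
      mink (fderiv ℝ f w 1) (fderiv ℝ f w 1)
          = (4 / ‖a w‖ ^ 2)
            * ‖1 - conj c * ((‖a w‖ ^ 2 : ℝ) : ℂ)‖ ^ 2 ∧
      mink (fderiv ℝ f w Complex.I) (fderiv ℝ f w Complex.I)
          = (4 / ‖a w‖ ^ 2)
            * ‖1 - conj c * ((‖a w‖ ^ 2 : ℝ) : ℂ)‖ ^ 2 ∧
      0 < (4 / ‖a w‖ ^ 2)
            * ‖1 - conj c * ((‖a w‖ ^ 2 : ℝ) : ℂ)‖ ^ 2 ∧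
      mink (fderiv ℝ f w 1) (fderiv ℝ f w Complex.I) = 0) ∧
    -- (ii) every component of f is harmonic
    (∀ i : Fin 4, ∀ w : ℂ, lapC (fun z => f z i) w = 0) ∧
    -- (iii) the projection (f⁰, f³) is an explicit affine bijection of ℝ²
    (∀ w : ℂ,
      f w 0 = X₀ 0 + 2 * ((1 + α) * w.re - β * w.im) ∧
      f w 3 = X₀ 3 + 2 * ((1 - α) * w.re + β * w.im)) ∧
    Function.Bijective (fun w : ℂ => ((f w 0, f w 3) : ℝ × ℝ)) ∧
    8 * β ≠ 0 := by
  have hfd : ∀ w, DifferentiableAt ℝ f w := fun w => (hf.differentiable (by simp)).differentiableAt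
  have hgd : ∀ (i : Fin 4), Differentiable ℝ (fun z => f z i) := by
    intro i w
    exact ((ContinuousLinearMap.proj i : (Fin 4 → ℝ) →L[ℝ] ℝ).differentiableAt).comp w (hfd w)
  have hproj : ∀ (w v : ℂ) (i : Fin 4), fderiv ℝ f w v i = fderiv ℝ (fun z => f z i) w v := by
    intro w v i
    have h := ((ContinuousLinearMap.proj i : (Fin 4 → ℝ) →L[ℝ] ℝ).hasFDerivAt.comp w
      (hfd w).hasFDerivAt).fderiv
    have h2 : fderiv ℝ (fun z => f z i) w
        = (ContinuousLinearMap.proj i : (Fin 4 → ℝ) →L[ℝ] ℝ).comp (fderiv ℝ f w) := by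
      rw [← h]; rfl
    rw [h2]; rfl
  have hD : ∀ (w : ℂ) (i : Fin 4),
      fderiv ℝ (fun z => f z i) w 1 = 2 * (Phi15 a c i w).re ∧
      fderiv ℝ (fun z => f z i) w Complex.I = -2 * (Phi15 a c i w).im := by
    intro w i
    exact wirt_real (fun z => f z i) w (hgd i w) (Phi15 a c i w) (hWei w i)
  refine ⟨?_, ?_, ?_, ?_, ?_⟩
  · -- (i)
    intro w
    have hval : ∀ v : Fin 4 → Prop, True := fun _ => trivial
    refine ⟨?_, ?_, ?_, ?_⟩
    · rw [mink, hproj w 1 0, hproj w 1 1, hproj w 1 2, hproj w 1 3,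
        (hD w 0).1, (hD w 1).1, (hD w 2).1, (hD w 3).1]
      exact mink_uu α β (a w) (ha0 w) c hc
    · rw [mink, hproj w Complex.I 0, hproj w Complex.I 1, hproj w Complex.I 2,
        hproj w Complex.I 3, (hD w 0).2, (hD w 1).2, (hD w 2).2, (hD w 3).2]
      exact mink_vv α β (a w) (ha0 w) c hc
    · have hAb : 0 < ‖a w‖ := norm_pos_iff.mpr (ha0 w)
      have hz : (1 : ℂ) - conj c * ((‖a w‖ ^ 2 : ℝ) : ℂ) ≠ 0 := by
        set r : ℝ := ‖a w‖ ^ 2 with hr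
        intro h
        have him : ((1 : ℂ) - conj c * ((r : ℝ) : ℂ)).im = β * r := by
          rw [hc]
          simp [Complex.sub_im, Complex.mul_im, Complex.conj_re, Complex.conj_im,
            Complex.ofReal_re, Complex.ofReal_im, map_add, map_mul, Complex.conj_ofReal,
            Complex.conj_I]
        rw [h] at him
        simp only [Complex.zero_im] at him
        exact mul_ne_zero hβ (pow_ne_zero 2 hAb.ne') him.symm
      have h2 : 0 < ‖1 - conj c * ((‖a w‖ ^ 2 : ℝ) : ℂ)‖ :=
        norm_pos_iff.mpr hz
      positivity
    · rw [mink, hproj w 1 0, hproj w 1 1, hproj w 1 2, hproj w 1 3,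
        hproj w Complex.I 0, hproj w Complex.I 1, hproj w Complex.I 2, hproj w Complex.I 3,
        (hD w 0).1, (hD w 1).1, (hD w 2).1, (hD w 3).1,
        (hD w 0).2, (hD w 1).2, (hD w 2).2, (hD w 3).2]
      exact mink_uv α β (a w) (ha0 w) c hc
  · -- (ii)
    intro i w
    have hΦd : Differentiable ℂ (Phi15 a c i) := Phi15_diff a ha ha0 c i
    have hΦdR : Differentiable ℝ (Phi15 a c i) := fun z => (hΦd z).restrictScalars ℝ
    have e1 : (fun z => fderiv ℝ (fun z' => f z' i) z 1) = fun z => 2 * (Phi15 a c i z).re :=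
      funext fun z => (hD z i).1
    have e2 : (fun z => fderiv ℝ (fun z' => f z' i) z Complex.I)
        = fun z => -2 * (Phi15 a c i z).im := funext fun z => (hD z i).2
    rw [lapC, e1, e2]
    have hre : fderiv ℝ (fun z => 2 * (Phi15 a c i z).re) w
        = (2:ℝ) • (Complex.reCLM.comp (fderiv ℝ (Phi15 a c i) w)) := by
      have h1 : fderiv ℝ (fun z => (Phi15 a c i z).re) w
          = Complex.reCLM.comp (fderiv ℝ (Phi15 a c i) w) :=
        (Complex.reCLM.hasFDerivAt.comp w (hΦdR w).hasFDerivAt).fderiv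
      rw [← h1]
      exact fderiv_const_mul (Complex.reCLM.differentiableAt.comp w (hΦdR w)) 2
    have him : fderiv ℝ (fun z => -2 * (Phi15 a c i z).im) w
        = (-2:ℝ) • (Complex.imCLM.comp (fderiv ℝ (Phi15 a c i) w)) := by
      have h1 : fderiv ℝ (fun z => (Phi15 a c i z).im) w
          = Complex.imCLM.comp (fderiv ℝ (Phi15 a c i) w) :=
        (Complex.imCLM.hasFDerivAt.comp w (hΦdR w).hasFDerivAt).fderiv
      rw [← h1]
      exact fderiv_const_mul (Complex.imCLM.differentiableAt.comp w (hΦdR w)) (-2)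
    rw [hre, him]
    have hrs : fderiv ℝ (Phi15 a c i) w
        = (fderiv ℂ (Phi15 a c i) w).restrictScalars ℝ :=
      (hΦd w).fderiv_restrictScalars ℝ
    have hI : (fderiv ℂ (Phi15 a c i) w) Complex.I
        = Complex.I * (fderiv ℂ (Phi15 a c i) w) 1 := by
      have h := (fderiv ℂ (Phi15 a c i) w).map_smul Complex.I (1:ℂ)
      simp only [smul_eq_mul, mul_one] at h
      exact h
    simp only [ContinuousLinearMap.smul_apply, ContinuousLinearMap.coe_comp', Function.comp,
      Complex.reCLM_apply, Complex.imCLM_apply, hrs, ContinuousLinearMap.coe_restrictScalars',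
      hI, smul_eq_mul]
    simp [Complex.mul_im]
  · -- (iii) explicit form
    intro w
    constructor
    · have h1 : ∀ z, fderiv ℝ (fun z' => f z' 0) z 1 = 2 * (1 + α) := by
        intro z
        rw [(hD z 0).1]
        simp [Phi15, hc]
      have h2 : ∀ z, fderiv ℝ (fun z' => f z' 0) z Complex.I = -2 * β := by
        intro z
        rw [(hD z 0).2]
        simp [Phi15, hc]
      have := const_partials (fun z => f z 0) (hgd 0) _ _ h1 h2 w
      rw [this, show f 0 0 = X₀ 0 from congrFun hf0 0]
      ring
    · have h1 : ∀ z, fderiv ℝ (fun z' => f z' 3) z 1 = 2 * (1 - α) := by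
        intro z
        rw [(hD z 3).1]
        simp [Phi15, hc]
      have h2 : ∀ z, fderiv ℝ (fun z' => f z' 3) z Complex.I = 2 * β := by
        intro z
        rw [(hD z 3).2]
        simp [Phi15, hc]
      have := const_partials (fun z => f z 3) (hgd 3) _ _ h1 h2 w
      rw [this, show f 0 3 = X₀ 3 from congrFun hf0 3]
      ring
  · -- bijectivity
    have hform0 : ∀ w : ℂ, f w 0 = X₀ 0 + 2 * ((1 + α) * w.re - β * w.im) := by
      intro w
      have h1 : ∀ z, fderiv ℝ (fun z' => f z' 0) z 1 = 2 * (1 + α) := by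
        intro z; rw [(hD z 0).1]; simp [Phi15, hc]
      have h2 : ∀ z, fderiv ℝ (fun z' => f z' 0) z Complex.I = -2 * β := by
        intro z; rw [(hD z 0).2]; simp [Phi15, hc]
      have := const_partials (fun z => f z 0) (hgd 0) _ _ h1 h2 w
      rw [this, show f 0 0 = X₀ 0 from congrFun hf0 0]
      ring
    have hform3 : ∀ w : ℂ, f w 3 = X₀ 3 + 2 * ((1 - α) * w.re + β * w.im) := by
      intro w
      have h1 : ∀ z, fderiv ℝ (fun z' => f z' 3) z 1 = 2 * (1 - α) := by
        intro z; rw [(hD z 3).1]; simp [Phi15, hc]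
      have h2 : ∀ z, fderiv ℝ (fun z' => f z' 3) z Complex.I = 2 * β := by
        intro z; rw [(hD z 3).2]; simp [Phi15, hc]
      have := const_partials (fun z => f z 3) (hgd 3) _ _ h1 h2 w
      rw [this, show f 0 3 = X₀ 3 from congrFun hf0 3]
      ring
    rw [Function.bijective_iff_has_inverse]
    refine ⟨fun pq =>
      (((pq.1 + pq.2 - X₀ 0 - X₀ 3) / 4 : ℝ) : ℂ)
        + (((pq.2 - X₀ 3 - 2 * (1 - α) * ((pq.1 + pq.2 - X₀ 0 - X₀ 3) / 4)) / (2 * β) : ℝ)) *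
            Complex.I, ?_, ?_⟩
    · intro w
      simp only [hform0 w, hform3 w]
      apply Complex.ext
      · simp only [Complex.add_re, Complex.ofReal_re, Complex.mul_re, Complex.I_re,
          Complex.I_im, Complex.ofReal_im, mul_zero, zero_mul, mul_one, sub_zero, zero_sub]
        ring
      · simp only [Complex.add_im, Complex.ofReal_im, Complex.mul_im, Complex.I_re,
          Complex.I_im, Complex.ofReal_re, mul_zero, zero_mul, mul_one, add_zero, zero_add]
        field_simp
        ring
    · intro pq
      have h0 := hform0 ((((pq.1 + pq.2 - X₀ 0 - X₀ 3) / 4 : ℝ) : ℂ)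
        + (((pq.2 - X₀ 3 - 2 * (1 - α) * ((pq.1 + pq.2 - X₀ 0 - X₀ 3) / 4)) / (2 * β) : ℝ)) *
            Complex.I)
      have h3 := hform3 ((((pq.1 + pq.2 - X₀ 0 - X₀ 3) / 4 : ℝ) : ℂ)
        + (((pq.2 - X₀ 3 - 2 * (1 - α) * ((pq.1 + pq.2 - X₀ 0 - X₀ 3) / 4)) / (2 * β) : ℝ)) *
            Complex.I)
      simp only [Complex.add_re, Complex.add_im, Complex.ofReal_re, Complex.ofReal_im,
        Complex.mul_re, Complex.mul_im, Complex.I_re, Complex.I_im, mul_zero, zero_mul,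
        mul_one, sub_zero, zero_sub, add_zero, zero_add] at h0 h3
      have e0 : f ((((pq.1 + pq.2 - X₀ 0 - X₀ 3) / 4 : ℝ) : ℂ)
        + (((pq.2 - X₀ 3 - 2 * (1 - α) * ((pq.1 + pq.2 - X₀ 0 - X₀ 3) / 4)) / (2 * β) : ℝ)) *
            Complex.I) 0 = pq.1 := by
        rw [h0]; field_simp; ring
      have e3 : f ((((pq.1 + pq.2 - X₀ 0 - X₀ 3) / 4 : ℝ) : ℂ)
        + (((pq.2 - X₀ 3 - 2 * (1 - α) * ((pq.1 + pq.2 - X₀ 0 - X₀ 3) / 4)) / (2 * β) : ℝ)) *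
            Complex.I) 3 = pq.2 := by
        rw [h3]; field_simp; ring
      simp only [e0, e3]
  · exact mul_ne_zero (by norm_num) hβ
end
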